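/- arXiv:2506.10428 — 2 statements merged into one kernel-verified Lean document; each statement's English description precedes it below -/
import Mathlib

section
/- There exists a constant C > 0 (depending on ν, α, δ, r, γ, ε but not on t) such that for all t ≥ 0: ν ‖y^ε_x(t)‖² + (ν/(2ε)) (y^ε(t,1))² + (δ/2) ‖y^ε(t)‖_{L⁴}⁴ + (e^{−2γt}/3) ∫₀ᵗ e^{2γs} ‖y^ε_t(s)‖² ds ≤ C e^{−2γt} ‖y₀‖₁². -/
open MeasureTheory intervalIntegral Real

/-- `L²(0,1)` norm squared: `‖v‖² = ∫₀¹ v(x)² dx`. -/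
noncomputable def L2sq (v : ℝ → ℝ) : ℝ := ∫ x in (0:ℝ)..1, (v x)^2

/-- `L⁴(0,1)` norm to the fourth power: `‖v‖_{L⁴}⁴ = ∫₀¹ v(x)⁴ dx`. -/
noncomputable def L4q (v : ℝ → ℝ) : ℝ := ∫ x in (0:ℝ)..1, (v x)^4

/-- Weighted inner product `(x, v) = ∫₀¹ x v(x) dx`. -/
noncomputable def xInner (v : ℝ → ℝ) : ℝ := ∫ x in (0:ℝ)..1, x * v x

/-- Sobolev `H^k(0,1)` norm squared: `‖v‖_k² = Σ_{i=0}^{k} ∫₀¹ (∂ₓⁱ v)² dx`. -/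
noncomputable def HkSq (k : ℕ) (v : ℝ → ℝ) : ℝ :=
  ∑ i ∈ Finset.range (k+1), ∫ x in (0:ℝ)..1, (iteratedDeriv i v x)^2

/-- Spatial derivative `y_x(t, ·)`. -/
noncomputable def dx (y : ℝ → ℝ → ℝ) (t : ℝ) : ℝ → ℝ := deriv (y t)

/-- Second spatial derivative `y_{xx}(t, ·)`. -/
noncomputable def dxx (y : ℝ → ℝ → ℝ) (t : ℝ) : ℝ → ℝ := iteratedDeriv 2 (y t)

/-- Time derivative `y_t(t, ·)`. -/
noncomputable def dt1 (y : ℝ → ℝ → ℝ) (t : ℝ) : ℝ → ℝ := fun x => deriv (fun s => y s x) t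

/-- Second time derivative `y_{tt}(t, ·)`. -/
noncomputable def dtt (y : ℝ → ℝ → ℝ) (t : ℝ) : ℝ → ℝ := fun x => iteratedDeriv 2 (fun s => y s x) t

/-- Mixed derivative `y_{xt}(t, ·)`. -/
noncomputable def dxt (y : ℝ → ℝ → ℝ) (t : ℝ) : ℝ → ℝ := deriv (dt1 y t)

/-- Mixed derivative `y_{xxt}(t, ·)`. -/
noncomputable def dxxt (y : ℝ → ℝ → ℝ) (t : ℝ) : ℝ → ℝ := iteratedDeriv 2 (dt1 y t)

set_option maxHeartbeats 1000000

open Set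

lemma slice_t {f : ℝ × ℝ → ℝ} (hf : Differentiable ℝ f) (t x : ℝ) :
    HasDerivAt (fun s => f (s, x)) (fderiv ℝ f (t, x) (1, 0)) t := by
  have h := (hf (t, x)).hasFDerivAt
  have hline : HasDerivAt (fun s : ℝ => ((s, x) : ℝ × ℝ)) ((1 : ℝ), (0 : ℝ)) t :=
    (hasDerivAt_id t).prodMk (hasDerivAt_const t x)
  simpa [Function.comp_def] using h.comp_hasDerivAt t hline

lemma slice_x {f : ℝ × ℝ → ℝ} (hf : Differentiable ℝ f) (t x : ℝ) :
    HasDerivAt (fun y => f (t, y)) (fderiv ℝ f (t, x) (0, 1)) x := by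
  have h := (hf (t, x)).hasFDerivAt
  have hline : HasDerivAt (fun y : ℝ => ((t, y) : ℝ × ℝ)) ((0 : ℝ), (1 : ℝ)) x :=
    (hasDerivAt_const x t).prodMk (hasDerivAt_id x)
  simpa [Function.comp_def] using h.comp_hasDerivAt x hline

lemma contDiff_fderiv_apply {f : ℝ × ℝ → ℝ} (hf : ContDiff ℝ (⊤ : ℕ∞) f) (v : ℝ × ℝ) :
    ContDiff ℝ (⊤ : ℕ∞) (fun p => fderiv ℝ f p v) :=
  (hf.fderiv_right (m := (⊤ : ℕ∞)) (by simp)).clm_apply contDiff_const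

lemma symm_mixed {f : ℝ × ℝ → ℝ} (hf : ContDiff ℝ (⊤ : ℕ∞) f) (p : ℝ × ℝ) (v u : ℝ × ℝ) :
    fderiv ℝ (fun q => fderiv ℝ f q v) p u = fderiv ℝ (fun q => fderiv ℝ f q u) p v := by
  have hdf : Differentiable ℝ (fderiv ℝ f) := (hf.fderiv_right (m := (⊤ : ℕ∞)) (by simp)).differentiable (by simp)
  have hsymm := second_derivative_symmetric (f := f) (f' := fderiv ℝ f)
    (f'' := fderiv ℝ (fderiv ℝ f) p) (x := p)
    (fun y => (hf.differentiable (by simp) y).hasFDerivAt) (hdf p).hasFDerivAt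
  have h1 : ∀ z : ℝ × ℝ, HasFDerivAt (fun q => fderiv ℝ f q z)
      ((ContinuousLinearMap.apply ℝ ℝ z).comp (fderiv ℝ (fderiv ℝ f) p)) p := fun z =>
    (ContinuousLinearMap.apply ℝ ℝ z).hasFDerivAt.comp p (hdf p).hasFDerivAt
  rw [(h1 v).fderiv, (h1 u).fderiv]
  exact hsymm u v


lemma hasDerivAt_param {g g' : ℝ × ℝ → ℝ} (hg : Continuous g) (hg' : Continuous g')
    (hd : ∀ τ x, HasDerivAt (fun s => g (s, x)) (g' (τ, x)) τ) (t : ℝ) :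
    HasDerivAt (fun τ => ∫ x in (0:ℝ)..1, g (τ, x)) (∫ x in (0:ℝ)..1, g' (t, x)) t := by
  obtain ⟨M, hM⟩ : ∃ M, ∀ p ∈ (Icc (t-1) (t+1) ×ˢ Icc (0:ℝ) 1), |g' p| ≤ M := by
    rcases (isCompact_Icc.prod isCompact_Icc).exists_bound_of_continuousOn
      (hg'.continuousOn (s := (Icc (t-1) (t+1) ×ˢ Icc (0:ℝ) 1))) with ⟨M, hM⟩
    exact ⟨M, fun p hp => by simpa using hM p hp⟩
  have key := intervalIntegral.hasDerivAt_integral_of_dominated_loc_of_deriv_le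
    (F := fun τ x => g (τ, x)) (F' := fun τ x => g' (τ, x)) (x₀ := t)
    (a := (0:ℝ)) (b := 1) (μ := volume) (bound := fun _ => M) (s := Metric.ball t 1) (Metric.ball_mem_nhds t one_pos)
    (Filter.Eventually.of_forall fun τ =>
      ((hg.comp (continuous_const.prodMk continuous_id)).aestronglyMeasurable))
    ((hg.comp (continuous_const.prodMk continuous_id)).intervalIntegrable 0 1)
    ((hg'.comp (continuous_const.prodMk continuous_id)).aestronglyMeasurable)
    (Filter.Eventually.of_forall fun x hx τ hτ => by
      have hτ' : τ ∈ Icc (t-1) (t+1) := by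
        have := abs_lt.1 (by simpa [Real.dist_eq] using Metric.mem_ball.1 hτ)
        constructor <;> linarith [this.1, this.2]
      have hx' : x ∈ Icc (0:ℝ) 1 := by
        have hx2 : x ∈ Ioc (0:ℝ) 1 := by simpa [Set.uIoc_of_le (zero_le_one (α := ℝ))] using hx
        exact ⟨hx2.1.le, hx2.2⟩
      exact hM (τ, x) ⟨hτ', hx'⟩)
    (intervalIntegrable_const)
    (Filter.Eventually.of_forall fun x hx τ hτ => hd τ x)
  exact key.2

lemma CS_interval (f g : ℝ → ℝ) (a b : ℝ) (hab : a ≤ b) (hf : Continuous f) (hg : Continuous g) :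
    (∫ x in a..b, f x * g x) ^ 2 ≤ (∫ x in a..b, f x ^ 2) * (∫ x in a..b, g x ^ 2) := by
  have key : ∀ lam : ℝ, 0 ≤ (∫ x in a..b, f x ^ 2) * (lam * lam)
      + (2 * ∫ x in a..b, f x * g x) * lam + (∫ x in a..b, g x ^ 2) := by
    intro lam
    have h0 : 0 ≤ ∫ x in a..b, (lam * f x + g x) ^ 2 :=
      intervalIntegral.integral_nonneg hab fun x _ => sq_nonneg _
    have hexp : (∫ x in a..b, (lam * f x + g x) ^ 2)
        = (∫ x in a..b, (lam * lam) * f x ^ 2) + (∫ x in a..b, (2 * lam) * (f x * g x))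
          + (∫ x in a..b, g x ^ 2) := by
      rw [← intervalIntegral.integral_add ((show Continuous fun x => (lam * lam) * f x ^ 2 from continuous_const.mul (hf.pow 2)).intervalIntegrable a b)
        ((show Continuous fun x => (2 * lam) * (f x * g x) from continuous_const.mul (hf.mul hg)).intervalIntegrable a b),
        ← intervalIntegral.integral_add
        ((show Continuous fun x => (lam * lam) * f x ^ 2 + (2 * lam) * (f x * g x) from (continuous_const.mul (hf.pow 2)).add (continuous_const.mul (hf.mul hg))).intervalIntegrable a b)
        ((show Continuous fun x => g x ^ 2 from hg.pow 2).intervalIntegrable a b)]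
      congr 1; funext x; ring
    rw [hexp, intervalIntegral.integral_const_mul, intervalIntegral.integral_const_mul] at h0
    nlinarith [h0]
  have hd := discrim_le_zero key
  rw [discrim] at hd
  nlinarith [hd]

lemma zero_on_Icc_of_integral_sq_zero {f : ℝ → ℝ} (hf : Continuous f)
    (h : (∫ x in (0:ℝ)..1, f x ^ 2) = 0) : ∀ x ∈ Icc (0:ℝ) 1, f x = 0 := by
  by_contra hcon
  push_neg at hcon
  obtain ⟨x₀, hx₀, hfx₀⟩ := hcon
  have hpos : 0 < f x₀ ^ 2 := by positivity
  have hcont : Continuous (fun x => f x ^ 2) := hf.pow 2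
  obtain ⟨η, hη, hball⟩ := Metric.continuousAt_iff.1 hcont.continuousAt
    (f x₀ ^ 2 / 2) (by positivity)
  set c := max 0 (x₀ - η/2) with hc
  set d := min 1 (x₀ + η/2) with hdd
  have hcd : c < d := by
    rcases hx₀ with ⟨h0, h1⟩
    simp only [hc, hdd, lt_min_iff, max_lt_iff]
    exact ⟨⟨by linarith, by linarith⟩, ⟨by linarith, by linarith⟩⟩
  have hsub : ∀ y ∈ Icc c d, f x₀ ^ 2 / 2 ≤ f y ^ 2 := by
    intro y hy
    have hyd : dist y x₀ < η := by
      rw [Real.dist_eq, abs_lt]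
      rcases hy with ⟨hyc, hyd⟩
      have h1 : x₀ - η/2 ≤ c := le_max_right _ _
      have h2 : d ≤ x₀ + η/2 := min_le_right _ _
      constructor <;> nlinarith
    have := hball hyd
    rw [Real.dist_eq, abs_lt] at this
    linarith [this.1, this.2]
  have hc01 : c ∈ Icc (0:ℝ) 1 := by
    exact ⟨le_max_left _ _, le_trans hcd.le (min_le_left _ _)⟩
  have hd01 : d ∈ Icc (0:ℝ) 1 := ⟨le_trans hc01.1 hcd.le, min_le_left _ _⟩
  have hsplit : (∫ x in (0:ℝ)..1, f x ^ 2)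
      = (∫ x in (0:ℝ)..c, f x ^ 2) + (∫ x in c..d, f x ^ 2) + (∫ x in d..1, f x ^ 2) := by
    rw [intervalIntegral.integral_add_adjacent_intervals
      (hcont.intervalIntegrable 0 c) (hcont.intervalIntegrable c d)]
    rw [intervalIntegral.integral_add_adjacent_intervals
      (hcont.intervalIntegrable 0 d) (hcont.intervalIntegrable d 1)]
  have h1 : 0 ≤ ∫ x in (0:ℝ)..c, f x ^ 2 :=
    intervalIntegral.integral_nonneg hc01.1 fun x _ => sq_nonneg _
  have h3 : 0 ≤ ∫ x in d..1, f x ^ 2 :=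
    intervalIntegral.integral_nonneg hd01.2 fun x _ => sq_nonneg _
  have h2 : (d - c) * (f x₀ ^ 2 / 2) ≤ ∫ x in c..d, f x ^ 2 := by
    have hconst : IntervalIntegrable (fun _ : ℝ => f x₀ ^ 2 / 2) volume c d :=
      intervalIntegrable_const
    have := intervalIntegral.integral_mono_on hcd.le hconst
      (hcont.intervalIntegrable c d) (fun x hx => hsub x hx)
    rw [intervalIntegral.integral_const] at this; simpa [smul_eq_mul, mul_div_assoc] using this
  have hpos2 : 0 < (d - c) * (f x₀ ^ 2 / 2) := by
    apply mul_pos (by linarith) (by positivity)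
  linarith [hsplit, h1, h3, h2, hpos2]

namespace CI
variable (w : ℝ → ℝ → ℝ)

noncomputable def GX : ℝ × ℝ → ℝ := fun p => fderiv ℝ (Function.uncurry w) p (0, 1)
noncomputable def GT : ℝ × ℝ → ℝ := fun p => fderiv ℝ (Function.uncurry w) p (1, 0)
noncomputable def GXX : ℝ × ℝ → ℝ := fun p => fderiv ℝ (GX w) p (0, 1)
noncomputable def GXT : ℝ × ℝ → ℝ := fun p => fderiv ℝ (GT w) p (0, 1)
noncomputable def GTT : ℝ × ℝ → ℝ := fun p => fderiv ℝ (GT w) p (1, 0)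
noncomputable def qN (τ : ℝ) : ℝ := ∫ x in (0:ℝ)..1, (w τ x)^2
noncomputable def qP (τ : ℝ) : ℝ := ∫ x in (0:ℝ)..1, (GX w (τ, x))^2
noncomputable def qQ (τ : ℝ) : ℝ := ∫ x in (0:ℝ)..1, (w τ x)^4
noncomputable def qX (τ : ℝ) : ℝ := ∫ x in (0:ℝ)..1, x * w τ x
noncomputable def qT (τ : ℝ) : ℝ := ∫ x in (0:ℝ)..1, (GT w (τ, x))^2
noncomputable def dN (τ : ℝ) : ℝ := ∫ x in (0:ℝ)..1, 2 * w τ x * GT w (τ, x)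
noncomputable def dP (τ : ℝ) : ℝ := ∫ x in (0:ℝ)..1, 2 * GX w (τ, x) * GXT w (τ, x)
noncomputable def dQ (τ : ℝ) : ℝ := ∫ x in (0:ℝ)..1, 4 * (w τ x)^3 * GT w (τ, x)
noncomputable def dXq (τ : ℝ) : ℝ := ∫ x in (0:ℝ)..1, x * GT w (τ, x)
noncomputable def dT (τ : ℝ) : ℝ := ∫ x in (0:ℝ)..1, 2 * GT w (τ, x) * GTT w (τ, x)

variable {w}
variable (hs : ContDiff ℝ (⊤ : ℕ∞) (Function.uncurry w))
include hs

lemma hWd : Differentiable ℝ (Function.uncurry w) := hs.differentiable (by simp)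
lemma hWc : Continuous (Function.uncurry w) := (hWd hs).continuous
lemma hGXs : ContDiff ℝ (⊤ : ℕ∞) (GX w) := contDiff_fderiv_apply hs _
lemma hGTs : ContDiff ℝ (⊤ : ℕ∞) (GT w) := contDiff_fderiv_apply hs _
lemma hGXc : Continuous (GX w) := (hGXs hs).continuous
lemma hGTc : Continuous (GT w) := (hGTs hs).continuous
lemma hGXXc : Continuous (GXX w) := (contDiff_fderiv_apply (hGXs hs) _).continuous
lemma hGXTc : Continuous (GXT w) := (contDiff_fderiv_apply (hGTs hs) _).continuous
lemma hGTTc : Continuous (GTT w) := (contDiff_fderiv_apply (hGTs hs) _).continuous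

lemma hwx (t x : ℝ) : HasDerivAt (w t) (GX w (t, x)) x := slice_x (hWd hs) t x
lemma hwt (t x : ℝ) : HasDerivAt (fun s => w s x) (GT w (t, x)) t := slice_t (hWd hs) t x
lemma hGt_x (t x : ℝ) : HasDerivAt (fun y => GT w (t, y)) (GXT w (t, x)) x :=
  slice_x ((hGTs hs).differentiable (by simp)) t x
lemma hGt_t (t x : ℝ) : HasDerivAt (fun s => GT w (s, x)) (GTT w (t, x)) t :=
  slice_t ((hGTs hs).differentiable (by simp)) t x
lemma hGx_x (t x : ℝ) : HasDerivAt (fun y => GX w (t, y)) (GXX w (t, x)) x :=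
  slice_x ((hGXs hs).differentiable (by simp)) t x
lemma hGx_t (t x : ℝ) : HasDerivAt (fun s => GX w (s, x)) (GXT w (t, x)) t := by
  have h := slice_t ((hGXs hs).differentiable (by simp)) t x
  have hsym := symm_mixed hs (t, x) (0, 1) (1, 0)
  show HasDerivAt (fun s => GX w (s, x))
    (fderiv ℝ (fun q => fderiv ℝ (Function.uncurry w) q (1, 0)) (t, x) (0, 1)) t
  rw [← hsym]
  exact h

lemma dx_eq (t x : ℝ) : dx w t x = GX w (t, x) := (hwx hs t x).deriv
lemma dx_funext (t : ℝ) : dx w t = fun x => GX w (t, x) := funext fun x => dx_eq hs t x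
lemma dt1_eq (t x : ℝ) : dt1 w t x = GT w (t, x) := (hwt hs t x).deriv
lemma dxx_eq (t x : ℝ) : dxx w t x = GXX w (t, x) := by
  rw [dxx, iteratedDeriv_succ, iteratedDeriv_one]
  have : deriv (w t) = fun y => GX w (t, y) := funext fun y => (hwx hs t y).deriv
  rw [this]
  exact (hGx_x hs t x).deriv

lemma hasDerivAt_qN (t : ℝ) : HasDerivAt (qN w) (dN w t) t := by
  exact hasDerivAt_param (g := fun p => (w p.1 p.2)^2)
    (g' := fun p => 2 * w p.1 p.2 * GT w p)
    ((hWc hs).pow 2) ((continuous_const.mul (hWc hs)).mul (hGTc hs))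
    (fun τ x => by simpa using (hwt hs τ x).fun_pow 2) t

lemma hasDerivAt_qP (t : ℝ) : HasDerivAt (qP w) (dP w t) t := by
  exact hasDerivAt_param (g := fun p => (GX w p)^2)
    (g' := fun p => 2 * GX w p * GXT w p)
    ((hGXc hs).pow 2) ((continuous_const.mul (hGXc hs)).mul (hGXTc hs))
    (fun τ x => by simpa using (hGx_t hs τ x).fun_pow 2) t

lemma hasDerivAt_qQ (t : ℝ) : HasDerivAt (qQ w) (dQ w t) t := by
  exact hasDerivAt_param (g := fun p => (w p.1 p.2)^4)
    (g' := fun p => 4 * (w p.1 p.2)^3 * GT w p)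
    ((hWc hs).pow 4) ((continuous_const.mul ((hWc hs).pow 3)).mul (hGTc hs))
    (fun τ x => by simpa using (hwt hs τ x).fun_pow 4) t

lemma hasDerivAt_qX (t : ℝ) : HasDerivAt (qX w) (dXq w t) t := by
  exact hasDerivAt_param (g := fun p => p.2 * w p.1 p.2)
    (g' := fun p => p.2 * GT w p)
    (continuous_snd.mul (hWc hs)) (continuous_snd.mul (hGTc hs))
    (fun τ x => by simpa using (hwt hs τ x).const_mul x) t

lemma hasDerivAt_qT (t : ℝ) : HasDerivAt (qT w) (dT w t) t := by
  exact hasDerivAt_param (g := fun p => (GT w p)^2)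
    (g' := fun p => 2 * GT w p * GTT w p)
    ((hGTc hs).pow 2) ((continuous_const.mul (hGTc hs)).mul (hGTTc hs))
    (fun τ x => by simpa using (hGt_t hs τ x).fun_pow 2) t

lemma continuous_qT : Continuous (qT w) :=
  continuous_iff_continuousAt.2 fun s => (hasDerivAt_qT hs s).continuousAt

-- continuity of slices
lemma cw (t : ℝ) : Continuous (w t) :=
  (hWc hs).comp (continuous_const.prodMk continuous_id)
lemma cGX (t : ℝ) : Continuous (fun x => GX w (t, x)) :=
  (hGXc hs).comp (continuous_const.prodMk continuous_id)
lemma cGT (t : ℝ) : Continuous (fun x => GT w (t, x)) :=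
  (hGTc hs).comp (continuous_const.prodMk continuous_id)
lemma cGXX (t : ℝ) : Continuous (fun x => GXX w (t, x)) :=
  (hGXXc hs).comp (continuous_const.prodMk continuous_id)
lemma cGXT (t : ℝ) : Continuous (fun x => GXT w (t, x)) :=
  (hGXTc hs).comp (continuous_const.prodMk continuous_id)

omit hs
lemma qN_nonneg (t : ℝ) : 0 ≤ qN w t :=
  intervalIntegral.integral_nonneg zero_le_one fun x _ => sq_nonneg _
lemma qQ_nonneg (t : ℝ) : 0 ≤ qQ w t :=
  intervalIntegral.integral_nonneg zero_le_one fun x _ => by positivity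
lemma qP_nonneg (t : ℝ) : 0 ≤ qP w t :=
  intervalIntegral.integral_nonneg zero_le_one fun x _ => sq_nonneg _
lemma qT_nonneg (t : ℝ) : 0 ≤ qT w t :=
  intervalIntegral.integral_nonneg zero_le_one fun x _ => sq_nonneg _
include hs

lemma sqX_le (t : ℝ) : (qX w t)^2 ≤ qN w t / 3 := by
  have h := CS_interval (fun x => x) (w t) 0 1 zero_le_one continuous_id (cw hs t)
  have h2 : (∫ x in (0:ℝ)..1, x ^ 2) = 1/3 := by
    rw [integral_pow]; norm_num
  rw [h2] at h
  calc (qX w t)^2 ≤ 1/3 * qN w t := h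
    _ = qN w t / 3 := by ring

lemma sdX_le (t : ℝ) : (dXq w t)^2 ≤ qT w t / 3 := by
  have h := CS_interval (fun x => x) (fun x => GT w (t, x)) 0 1 zero_le_one
    continuous_id (cGT hs t)
  have h2 : (∫ x in (0:ℝ)..1, x ^ 2) = 1/3 := by
    rw [integral_pow]; norm_num
  rw [h2] at h
  calc (dXq w t)^2 ≤ 1/3 * qT w t := h
    _ = qT w t / 3 := by ring

lemma poincare (t : ℝ) (h0 : w t 0 = 0) : qN w t ≤ qP w t / 2 := by
  have hstep : ∀ x ∈ Icc (0:ℝ) 1, (w t x)^2 ≤ x * qP w t := by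
    intro x hx
    have hftc : (∫ y in (0:ℝ)..x, GX w (t, y)) = w t x - w t 0 :=
      intervalIntegral.integral_eq_sub_of_hasDerivAt (fun y _ => hwx hs t y)
        ((cGX hs t).intervalIntegrable 0 x)
    rw [h0, sub_zero] at hftc
    have hCS := CS_interval (fun _ => 1) (fun y => GX w (t, y)) 0 x hx.1
      continuous_const (cGX hs t)
    have h1 : (∫ y in (0:ℝ)..x, (1:ℝ) * GX w (t, y)) = w t x := by
      simpa using hftc
    have h2 : (∫ y in (0:ℝ)..x, ((1:ℝ))^2) = x := by simp
    rw [h1, h2] at hCS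
    have hmono : (∫ y in (0:ℝ)..x, (GX w (t, y))^2) ≤ qP w t := by
      have hsplit : qP w t = (∫ y in (0:ℝ)..x, (GX w (t, y))^2)
          + (∫ y in x..1, (GX w (t, y))^2) :=
        (intervalIntegral.integral_add_adjacent_intervals
          (((cGX hs t).pow 2).intervalIntegrable 0 x)
          (((cGX hs t).pow 2).intervalIntegrable x 1)).symm
      have hnn : 0 ≤ ∫ y in x..1, (GX w (t, y))^2 :=
        intervalIntegral.integral_nonneg hx.2 fun y _ => sq_nonneg _
      linarith
    nlinarith [hx.1, hCS, hmono]
  have hInt1 : IntervalIntegrable (fun x => (w t x)^2) volume 0 1 :=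
    ((cw hs t).pow 2).intervalIntegrable 0 1
  have hInt2 : IntervalIntegrable (fun x => x * qP w t) volume 0 1 :=
    (continuous_id.mul continuous_const).intervalIntegrable 0 1
  have h := intervalIntegral.integral_mono_on zero_le_one hInt1 hInt2 hstep
  have h2 : (∫ x in (0:ℝ)..1, x * qP w t) = qP w t / 2 := by
    rw [intervalIntegral.integral_mul_const, integral_id]; ring
  rw [h2] at h
  exact h

lemma GT_at0 (t : ℝ) (ht : 0 < t) (hbc : ∀ s ≥ (0:ℝ), w s 0 = 0) : GT w (t, 0) = 0 := by
  have h := hwt hs t 0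
  have hev : (fun _ : ℝ => (0:ℝ)) =ᶠ[nhds t] fun s => w s 0 :=
    Filter.eventually_of_mem (Ioi_mem_nhds ht) fun s hsp => (hbc s (le_of_lt hsp)).symm
  have h2 : HasDerivAt (fun _ : ℝ => (0:ℝ)) (GT w (t, 0)) t := h.congr_of_eventuallyEq hev
  exact (h2.unique (hasDerivAt_const t (0:ℝ)))

lemma ibp1 (t : ℝ) : (∫ x in (0:ℝ)..1, GT w (t, x) * GXX w (t, x))
    = GT w (t, 1) * GX w (t, 1) - GT w (t, 0) * GX w (t, 0)
      - ∫ x in (0:ℝ)..1, GXT w (t, x) * GX w (t, x) :=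
  intervalIntegral.integral_mul_deriv_eq_deriv_mul
    (fun x _ => hGt_x hs t x) (fun x _ => hGx_x hs t x)
    ((cGXT hs t).intervalIntegrable 0 1) ((cGXX hs t).intervalIntegrable 0 1)

lemma ibp2 (t : ℝ) : (∫ x in (0:ℝ)..1, w t x * GXX w (t, x))
    = w t 1 * GX w (t, 1) - w t 0 * GX w (t, 0)
      - ∫ x in (0:ℝ)..1, GX w (t, x) * GX w (t, x) :=
  intervalIntegral.integral_mul_deriv_eq_deriv_mul
    (fun x _ => hwx hs t x) (fun x _ => hGx_x hs t x)
    ((cGX hs t).intervalIntegrable 0 1) ((cGXX hs t).intervalIntegrable 0 1)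

lemma integral_pde_mul {ν α δ : ℝ} (t : ℝ)
    (hpt : ∀ x ∈ Set.Ioo (0:ℝ) 1, GT w (t, x) = ν * GXX w (t, x) + α * w t x - δ * (w t x)^3)
    (h : ℝ → ℝ) (hh : Continuous h) :
    (∫ x in (0:ℝ)..1, GT w (t, x) * h x)
      = ν * (∫ x in (0:ℝ)..1, GXX w (t, x) * h x) + α * (∫ x in (0:ℝ)..1, w t x * h x)
        - δ * (∫ x in (0:ℝ)..1, (w t x)^3 * h x) := by
  have hae : ∀ᵐ x ∂(volume : Measure ℝ), x ∈ Set.uIoc (0:ℝ) 1 →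
      GT w (t, x) * h x = ν * (GXX w (t, x) * h x) + α * (w t x * h x) - δ * ((w t x)^3 * h x) := by
    have hne : ∀ᵐ x ∂(volume : Measure ℝ), x ≠ 1 := by
      rw [Filter.eventually_iff, mem_ae_iff]
      simpa using Real.volume_singleton (a := 1)
    filter_upwards [hne] with x hx1 hxI
    have hxIoc : x ∈ Ioc (0:ℝ) 1 := by
      simpa [Set.uIoc_of_le (zero_le_one (α := ℝ))] using hxI
    have hxIoo : x ∈ Ioo (0:ℝ) 1 := ⟨hxIoc.1, lt_of_le_of_ne hxIoc.2 hx1⟩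
    rw [hpt x hxIoo]; ring
  rw [intervalIntegral.integral_congr_ae hae]
  have i1 : IntervalIntegrable (fun x => GXX w (t, x) * h x) volume 0 1 :=
    ((cGXX hs t).mul hh).intervalIntegrable 0 1
  have i2 : IntervalIntegrable (fun x => w t x * h x) volume 0 1 :=
    ((cw hs t).mul hh).intervalIntegrable 0 1
  have i3 : IntervalIntegrable (fun x => (w t x)^3 * h x) volume 0 1 :=
    (((cw hs t).pow 3).mul hh).intervalIntegrable 0 1
  rw [show (fun x => ν * (GXX w (t, x) * h x) + α * (w t x * h x) - δ * ((w t x)^3 * h x))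
      = fun x => (ν * (GXX w (t, x) * h x) + α * (w t x * h x)) - δ * ((w t x)^3 * h x) by
    funext x; ring]
  rw [intervalIntegral.integral_sub ((i1.const_mul ν).add (i2.const_mul α)) (i3.const_mul δ),
    intervalIntegral.integral_add (i1.const_mul ν) (i2.const_mul α),
    intervalIntegral.integral_const_mul, intervalIntegral.integral_const_mul,
    intervalIntegral.integral_const_mul]

omit hs
lemma icomm (f g : ℝ → ℝ) : (∫ x in (0:ℝ)..1, f x * g x) = ∫ x in (0:ℝ)..1, g x * f x :=
  intervalIntegral.integral_congr fun x _ => mul_comm (f x) (g x)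
include hs

lemma key2 {ν α δ : ℝ} (t : ℝ)
    (hpt : ∀ x ∈ Set.Ioo (0:ℝ) 1, GT w (t, x) = ν * GXX w (t, x) + α * w t x - δ * (w t x)^3)
    (h0 : w t 0 = 0) :
    dN w t = 2*ν*(w t 1 * GX w (t, 1)) - 2*ν*qP w t + 2*α*qN w t - 2*δ*qQ w t := by
  have h_dN : dN w t = 2 * ∫ x in (0:ℝ)..1, GT w (t, x) * w t x := by
    rw [dN, ← intervalIntegral.integral_const_mul]
    exact intervalIntegral.integral_congr fun x _ => by ring
  have hpm := integral_pde_mul hs t hpt (w t) (cw hs t)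
  have hGXXw : (∫ x in (0:ℝ)..1, GXX w (t, x) * w t x)
      = w t 1 * GX w (t, 1) - qP w t := by
    rw [icomm, ibp2 hs t, h0]
    have : (∫ x in (0:ℝ)..1, GX w (t, x) * GX w (t, x)) = qP w t :=
      intervalIntegral.integral_congr fun x _ => (sq (GX w (t, x))).symm
    rw [this]; ring
  have hw2 : (∫ x in (0:ℝ)..1, w t x * w t x) = qN w t :=
    intervalIntegral.integral_congr fun x _ => (sq (w t x)).symm
  have hw4 : (∫ x in (0:ℝ)..1, (w t x)^3 * w t x) = qQ w t :=
    intervalIntegral.integral_congr fun x _ => by ring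
  rw [h_dN, hpm, hGXXw, hw2, hw4]; ring

lemma key1 {ν α δ r ε : ℝ} (t : ℝ) (hε : ε ≠ 0)
    (hpt : ∀ x ∈ Set.Ioo (0:ℝ) 1, GT w (t, x) = ν * GXX w (t, x) + α * w t x - δ * (w t x)^3)
    (hrob : ε * GX w (t, 1) + w t 1 = -r * qX w t)
    (hGT0 : GT w (t, 0) = 0) :
    (ν/2)*dP w t - (α/2)*dN w t + (δ/4)*dQ w t + (ν/(2*ε))*(2*(w t 1)*GT w (t, 1))
      + (ν*r/ε)*(dXq w t * (w t 1) + qX w t * GT w (t, 1))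
    = -(qT w t) + (ν*r/ε) * (dXq w t * (w t 1)) := by
  have h_dP : dP w t = 2 * ∫ x in (0:ℝ)..1, GXT w (t, x) * GX w (t, x) := by
    rw [dP, ← intervalIntegral.integral_const_mul]
    exact intervalIntegral.integral_congr fun x _ => by ring
  have h_dN : dN w t = 2 * ∫ x in (0:ℝ)..1, w t x * GT w (t, x) := by
    rw [dN, ← intervalIntegral.integral_const_mul]
    exact intervalIntegral.integral_congr fun x _ => by ring
  have h_dQ : dQ w t = 4 * ∫ x in (0:ℝ)..1, (w t x)^3 * GT w (t, x) := by
    rw [dQ, ← intervalIntegral.integral_const_mul]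
    exact intervalIntegral.integral_congr fun x _ => by ring
  have hqT : qT w t = ∫ x in (0:ℝ)..1, GT w (t, x) * GT w (t, x) :=
    intervalIntegral.integral_congr fun x _ => sq (GT w (t, x))
  have hpm := integral_pde_mul hs t hpt (fun x => GT w (t, x)) (cGT hs t)
  have hGXXGT : (∫ x in (0:ℝ)..1, GXX w (t, x) * GT w (t, x))
      = GT w (t, 1) * GX w (t, 1) - ∫ x in (0:ℝ)..1, GXT w (t, x) * GX w (t, x) := by
    rw [icomm, ibp1 hs t, hGT0]; ring
  have hz : ν * (GT w (t, 1) * GX w (t, 1)) + ν/ε*(w t 1 * GT w (t, 1))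
      + ν*r/ε*(qX w t * GT w (t, 1)) = 0 := by
    field_simp
    linear_combination (ν * GT w (t, 1)) * hrob
  beta_reduce at hpm
  rw [hGXXGT] at hpm
  rw [h_dP, h_dN, h_dQ, hqT]
  linear_combination hz + hpm

variable (w)
noncomputable def V (ν α δ r ε : ℝ) (τ : ℝ) : ℝ :=
  ν/2 * qP w τ - α/2 * qN w τ + δ/4 * qQ w τ + ν/(2*ε) * (w τ 1)^2
    + ν*r/ε * (qX w τ * w τ 1)

noncomputable def DV (ν α δ r ε : ℝ) (t : ℝ) : ℝ :=
  ν/2 * dP w t - α/2 * dN w t + δ/4 * dQ w t + ν/(2*ε) * (2*(w t 1)*GT w (t, 1))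
    + ν*r/ε * (dXq w t * w t 1 + qX w t * GT w (t, 1))

noncomputable def Phi (ν α δ r ε γ A : ℝ) (τ : ℝ) : ℝ :=
  Real.exp (2*γ*τ) * (A * qN w τ + V w ν α δ r ε τ)
    + 1/2 * ∫ s in (0:ℝ)..τ, Real.exp (2*γ*s) * qT w s

noncomputable def DPhi (ν α δ r ε γ A : ℝ) (t : ℝ) : ℝ :=
  (2*γ*Real.exp (2*γ*t)) * (A * qN w t + V w ν α δ r ε t)
    + Real.exp (2*γ*t) * (A * dN w t + DV w ν α δ r ε t)
    + 1/2 * (Real.exp (2*γ*t) * qT w t)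

variable {w}

lemma hasDerivAt_V {ν α δ r ε : ℝ} (t : ℝ) :
    HasDerivAt (V w ν α δ r ε) (DV w ν α δ r ε t) t := by
  have hb2 : HasDerivAt (fun τ => (w τ 1)^2) (2*(w t 1)*GT w (t, 1)) t := by
    simpa using (hwt hs t 1).fun_pow 2
  exact (((((hasDerivAt_qP hs t).const_mul (ν/2)).sub
    ((hasDerivAt_qN hs t).const_mul (α/2))).add
    ((hasDerivAt_qQ hs t).const_mul (δ/4))).add
    (hb2.const_mul (ν/(2*ε)))).add
    (((hasDerivAt_qX hs t).mul (hwt hs t 1)).const_mul (ν*r/ε))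

lemma hasDerivAt_Phi {ν α δ r ε γ A : ℝ} (t : ℝ) :
    HasDerivAt (Phi w ν α δ r ε γ A) (DPhi w ν α δ r ε γ A t) t := by
  have hexp : HasDerivAt (fun τ => Real.exp (2*γ*τ)) (2*γ*Real.exp (2*γ*t)) t := by
    have h := (((hasDerivAt_id t).const_mul (2*γ)).exp)
    simp only [id] at h
    convert h using 1
    ring
  have hfc : Continuous (fun s => Real.exp (2*γ*s) * qT w s) :=
    (Real.continuous_exp.comp (continuous_const.mul continuous_id)).mul (continuous_qT hs)
  have hI : HasDerivAt (fun τ => ∫ s in (0:ℝ)..τ, Real.exp (2*γ*s) * qT w s)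
      (Real.exp (2*γ*t) * qT w t) t :=
    intervalIntegral.integral_hasDerivAt_right (hfc.intervalIntegrable 0 t)
      (hfc.stronglyMeasurableAtFilter volume (nhds t)) hfc.continuousAt
  exact ((hexp.mul (((hasDerivAt_qN hs t).const_mul A).add (hasDerivAt_V hs t))).add
    (hI.const_mul (1/2)))

lemma key1' {ν α δ r ε : ℝ} (t : ℝ) (hε : ε ≠ 0)
    (hpt : ∀ x ∈ Set.Ioo (0:ℝ) 1, GT w (t, x) = ν * GXX w (t, x) + α * w t x - δ * (w t x)^3)
    (hrob : ε * GX w (t, 1) + w t 1 = -r * qX w t)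
    (hGT0 : GT w (t, 0) = 0) :
    DV w ν α δ r ε t = -(qT w t) + (ν*r/ε) * (dXq w t * (w t 1)) := by
  have h := key1 hs t hε hpt hrob hGT0
  unfold DV
  linarith [h]

set_option maxHeartbeats 1000000 in
omit hs in
lemma core_ineq (ν α δ r ε γ A u v : ℝ)
    (nn pp qq xx tt b dn dxq vv : ℝ)
    (hν : 0 < ν) (hα : 0 < α) (hδ : 0 < δ) (hr0 : 0 < r) (hε : 0 < ε)
    (hu0 : 0 < u) (hv0 : 0 < v) (hεu : ε * u = 1) (hrv : r * v = 1)
    (hA1a : r^2 < 3*ε) (hγ0 : 0 < γ)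
    (hγu : γ ≤ 2*ν - 2/3*(ν*r^2*u) - α)
    (hAu : A = 2*ε*γ*v^2 + γ*v/3 + γ/4 + γ*(1+r) + ν*r^2*u/6 + α/2 + ν*r^2*u/3 + 1)
    (hVu : vv = ν/2*pp - α/2*nn + δ/4*qq + ν*u/2*b^2 + ν*r*u*(xx*b))
    (k2u : dn = -(2*ν*u)*b^2 - (2*ν*r*u)*(xx*b) - 2*ν*pp + 2*α*nn - 2*δ*qq)
    (B1 : xx^2 ≤ nn/3) (B2 : dxq^2 ≤ tt/3) (B3 : nn ≤ pp/2)
    (hNn : 0 ≤ nn) (hPn : 0 ≤ pp) (hQn : 0 ≤ qq) (hTn : 0 ≤ tt) :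
    2*γ*(A*nn + vv) + (A*dn + (-tt + ν*r*u*(dxq*b))) + 1/2*tt ≤ 0 := by
  have hA0 : 0 < A := by rw [hAu]; positivity
  have hc10 : γ*ν + γ*ν*r*u/6 ≤ 2*A*(r^2*u/4)*ν := by
    have heq : 2*A*(r^2*u/4)*ν = γ*ν*(ε*u)*(r*v)^2 + γ*ν*r*u*(r*v)/6
        + (γ/4 + γ*(1+r) + ν*r^2*u/6 + α/2 + ν*r^2*u/3 + 1)*(r^2*u*ν/2) := by
      rw [hAu]; ring
    rw [hεu, hrv] at heq
    have hrest : (0:ℝ) ≤ (γ/4 + γ*(1+r) + ν*r^2*u/6 + α/2 + ν*r^2*u/3 + 1)*(r^2*u*ν/2) := by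
      positivity
    nlinarith [heq, hrest]
  have hc20 : γ*ν*(1+r)*u + ν^2*r^2*u^2/6 ≤ A*ν*u := by
    have heq : A*ν*u = γ*ν*(1+r)*u + ν^2*r^2*u^2/6
        + (2*ε*γ*v^2 + γ*v/3 + γ/4 + α/2 + ν*r^2*u/3 + 1)*(ν*u) := by
      rw [hAu]; ring
    have hrest : (0:ℝ) ≤ (2*ε*γ*v^2 + γ*v/3 + γ/4 + α/2 + ν*r^2*u/3 + 1)*(ν*u) := by positivity
    linarith [heq, hrest]
  have hc30 : γ*δ/2 ≤ 2*A*δ := by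
    have hA4 : γ/4 ≤ A := by
      rw [hAu]
      have : (0:ℝ) ≤ 2*ε*γ*v^2 + γ*v/3 + γ*(1+r) + ν*r^2*u/6 + α/2 + ν*r^2*u/3 + 1 := by
        positivity
      linarith
    nlinarith [hA4, hδ.le]
  have s1 : ν*r*u*(dxq*b) ≤ 1/2*tt + ν^2*r^2*u^2/6*b^2 := by
    nlinarith [sq_nonneg (3*dxq - ν*r*u*b), B2]
  have hs2 : -(2*ν*r*u)*(xx*b) ≤ ν*u*b^2 + ν*r^2*u*xx^2 := by
    nlinarith [mul_nonneg (mul_nonneg hν.le hu0.le) (sq_nonneg (b + r*xx))]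
  have hxN : ν*r^2*u*xx^2 ≤ ν*r^2*u*(nn/3) := by
    have : (0:ℝ) ≤ ν*r^2*u := by positivity
    exact mul_le_mul_of_nonneg_left B1 this
  have hth : r^2*u ≤ 3 := by nlinarith [hA1a, hεu, hu0]
  have hpoin : 2*(1 - r^2*u/4)*ν*(2*nn) ≤ 2*(1 - r^2*u/4)*ν*pp := by
    have hco : (0:ℝ) ≤ 2*(1 - r^2*u/4)*ν := by nlinarith [hth, hν.le]
    exact mul_le_mul_of_nonneg_left (by linarith) hco
  have hcoefn : (2*α + ν*r^2*u/3 - (4*ν - ν*r^2*u))*nn ≤ -2*γ*nn := by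
    apply mul_le_mul_of_nonneg_right _ hNn
    linarith [hγu]
  have s3 : dn ≤ -2*γ*nn - 2*(r^2*u/4)*ν*pp - ν*u*b^2 - 2*δ*qq := by
    linarith [k2u, hs2, hxN, hpoin, hcoefn]
  have hs3A := mul_le_mul_of_nonneg_left s3 hA0.le
  have s4 : 2*γ*vv ≤ (γ*ν + γ*ν*r*u/6)*pp + γ*δ/2*qq + γ*ν*(1+r)*u*b^2 := by
    have h4a : 2*(xx*b) ≤ xx^2 + b^2 := by nlinarith [sq_nonneg (xx - b)]
    have h4b := mul_le_mul_of_nonneg_left h4a (by positivity : (0:ℝ) ≤ γ*ν*r*u)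
    have h4c : γ*ν*r*u*xx^2 ≤ γ*ν*r*u*(pp/6) :=
      mul_le_mul_of_nonneg_left (by linarith) (by positivity)
    have h4d : (0:ℝ) ≤ γ*α*nn := by positivity
    rw [hVu]
    linarith [h4b, h4c, h4d]
  have hc1 := mul_le_mul_of_nonneg_right hc10 hPn
  have hc2 := mul_le_mul_of_nonneg_right hc20 (sq_nonneg b)
  have hc3 := mul_le_mul_of_nonneg_right hc30 hQn
  linarith only [s1, hs3A, s4, hc1, hc2, hc3]

set_option maxHeartbeats 1000000 in
omit hs in
lemma core_lower (ν α δ r ε γ A u v : ℝ)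
    (nn pp qq xx b vv : ℝ)
    (hν : 0 < ν) (hα : 0 < α) (hδ : 0 < δ) (hr0 : 0 < r) (hε : 0 < ε)
    (hu0 : 0 < u) (hv0 : 0 < v) (hεu : ε * u = 1) (hrv : r * v = 1) (hγ0 : 0 < γ)
    (hAu : A = 2*ε*γ*v^2 + γ*v/3 + γ/4 + γ*(1+r) + ν*r^2*u/6 + α/2 + ν*r^2*u/3 + 1)
    (hVu : vv = ν/2*pp - α/2*nn + δ/4*qq + ν*u/2*b^2 + ν*r*u*(xx*b))
    (B1 : xx^2 ≤ nn/3)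
    (hNn : 0 ≤ nn) (hPn : 0 ≤ pp) (hQn : 0 ≤ qq) :
    ν/2*pp + δ/4*qq + ν*u/4*b^2 + nn ≤ A*nn + vv := by
  have hAge : α/2 + ν*r^2*u/3 + 1 ≤ A := by
    rw [hAu]
    have : (0:ℝ) ≤ 2*ε*γ*v^2 + γ*v/3 + γ/4 + γ*(1+r) + ν*r^2*u/6 := by positivity
    linarith
  have hcross : -(ν*u/4)*b^2 - ν*r^2*u*xx^2 ≤ ν*r*u*(xx*b) := by
    nlinarith [mul_nonneg (mul_nonneg hν.le hu0.le) (sq_nonneg (b/2 + r*xx))]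
  have hxN : ν*r^2*u*xx^2 ≤ ν*r^2*u*(nn/3) := by
    have : (0:ℝ) ≤ ν*r^2*u := by positivity
    exact mul_le_mul_of_nonneg_left B1 this
  have hAn := mul_le_mul_of_nonneg_right hAge hNn
  rw [hVu]
  linarith only [hcross, hxN, hAn]

lemma DPhi_nonpos {ν α δ r ε γ A : ℝ}
    (hν : 0 < ν) (hα : 0 < α) (hδ : 0 < δ) (hr0 : 0 < r) (hε : 0 < ε)
    (hA1a : r^2 < 3*ε) (hγ0 : 0 < γ) (hγ : γ ≤ 2*ν - 2*ν*r^2/(3*ε) - α)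
    (hAdef : A = 2*ε*γ/r^2 + γ/(3*r) + γ/4 + γ*(1+r) + ν*r^2/(6*ε) + α/2 + ν*r^2/(3*ε) + 1)
    (t : ℝ)
    (hpt : ∀ x ∈ Set.Ioo (0:ℝ) 1, GT w (t, x) = ν * GXX w (t, x) + α * w t x - δ * (w t x)^3)
    (hrob : ε * GX w (t, 1) + w t 1 = -r * qX w t)
    (hGT0 : GT w (t, 0) = 0) (h0 : w t 0 = 0) :
    DPhi w ν α δ r ε γ A t ≤ 0 := by
  obtain ⟨u, hu'⟩ : ∃ u : ℝ, u = ε⁻¹ := ⟨_, rfl⟩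
  obtain ⟨v, hv'⟩ : ∃ v : ℝ, v = r⁻¹ := ⟨_, rfl⟩
  have hu0 : 0 < u := by rw [hu']; positivity
  have hv0 : 0 < v := by rw [hv']; positivity
  have hεu : ε * u = 1 := by rw [hu']; field_simp
  have hrv : r * v = 1 := by rw [hv']; field_simp
  have k1 := key1' hs t (ne_of_gt hε) hpt hrob hGT0
  have k2 := key2 hs t hpt h0
  have B1 := sqX_le hs t
  have B2 := sdX_le hs t
  have B3 := poincare hs t h0
  have hNn := qN_nonneg (w := w) t
  have hPn := qP_nonneg (w := w) t
  have hQn := qQ_nonneg (w := w) t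
  have hTn := qT_nonneg (w := w) t
  -- u-form conversions
  have hγu : γ ≤ 2*ν - 2/3*(ν*r^2*u) - α := by
    have heq : 2*ν*r^2/(3*ε) = 2/3*(ν*r^2*u) := by rw [hu']; ring
    linarith [hγ, heq]
  have hAu : A = 2*ε*γ*v^2 + γ*v/3 + γ/4 + γ*(1+r) + ν*r^2*u/6 + α/2 + ν*r^2*u/3 + 1 := by
    rw [hAdef, hu', hv']; ring
  have hA0 : 0 < A := by rw [hAu]; positivity
  have hVu : V w ν α δ r ε t = ν/2*qP w t - α/2*qN w t + δ/4*qQ w t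
      + ν*u/2*(w t 1)^2 + ν*r*u*(qX w t * w t 1) := by
    unfold V; rw [hu']; ring
  have k1u : DV w ν α δ r ε t = -(qT w t) + ν*r*u*(dXq w t * w t 1) := by
    rw [k1, hu']; ring
  have hGX1 : GX w (t, 1) = (-(w t 1) - r * qX w t)/ε := by
    field_simp
    linarith [hrob]
  have k2u : dN w t = -(2*ν*u)*(w t 1)^2 - (2*ν*r*u)*(qX w t * w t 1)
      - 2*ν*qP w t + 2*α*qN w t - 2*δ*qQ w t := by
    rw [k2, hGX1, hu']; ring
  have hZ : 2*γ*(A * qN w t + V w ν α δ r ε t) + (A * dN w t + DV w ν α δ r ε t)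
      + 1/2 * qT w t ≤ 0 := by
    rw [k1u]
    exact core_ineq ν α δ r ε γ A u v (qN w t) (qP w t) (qQ w t) (qX w t) (qT w t)
      (w t 1) (dN w t) (dXq w t) (V w ν α δ r ε t)
      hν hα hδ hr0 hε hu0 hv0 hεu hrv hA1a hγ0 hγu hAu hVu k2u B1 B2 B3 hNn hPn hQn hTn
  have hE := Real.exp_pos (2*γ*t)
  unfold DPhi
  calc (2*γ*Real.exp (2*γ*t)) * (A * qN w t + V w ν α δ r ε t)
      + Real.exp (2*γ*t) * (A * dN w t + DV w ν α δ r ε t)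
      + 1/2 * (Real.exp (2*γ*t) * qT w t)
      = Real.exp (2*γ*t) * (2*γ*(A * qN w t + V w ν α δ r ε t)
          + (A * dN w t + DV w ν α δ r ε t) + 1/2 * qT w t) := by ring
    _ ≤ Real.exp (2*γ*t) * 0 := mul_le_mul_of_nonneg_left hZ hE.le
    _ = 0 := mul_zero _
end CI

theorem penalized_H1_stabilization
    (ν α δ r γ ε : ℝ) (w : ℝ → ℝ → ℝ)
    (hν : 0 < ν) (hα : 0 < α) (hδ : 0 < δ) (hr0 : 0 < r) (hε : 0 < ε)
    -- smooth classical solution (C^∞ up to the boundary)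
    (hsmooth : ContDiff ℝ (⊤ : ℕ∞) (Function.uncurry w))
    -- penalized Chafee–Infante equation w_t = ν w_xx + α w − δ w³ on (0,∞) × (0,1)
    (hpde : ∀ t > (0:ℝ), ∀ x ∈ Set.Ioo (0:ℝ) 1,
      dt1 w t x = ν * dxx w t x + α * w t x - δ * (w t x)^3)
    -- boundary conditions: w(t,0) = 0 and Robin condition ε w_x(t,1) + w(t,1) = u^ε(t)
    (hbc0 : ∀ t ≥ (0:ℝ), w t 0 = 0)
    (hrobin : ∀ t > (0:ℝ), ε * dx w t 1 + w t 1 = -r * xInner (w t))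
    -- Assumption (A1)
    (hA1a : r^2 < 3*ε)
    (hA1b : α / ν ≤ 2 * (3*ε - r^2) / (3*ε))
    (hγ0 : 0 < γ) (hγ : γ ≤ 2*ν - 2*ν*r^2/(3*ε) - α) :
    ∃ C > (0:ℝ), ∀ t ≥ (0:ℝ),
      ν * L2sq (dx w t) + (ν/(2*ε)) * (w t 1)^2 + (δ/2) * L4q (w t)
        + (Real.exp (-2*γ*t) / 3) * (∫ s in (0:ℝ)..t, Real.exp (2*γ*s) * L2sq (dt1 w s))
      ≤ C * Real.exp (-2*γ*t) * HkSq 1 (w 0) := by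
  classical
  obtain ⟨A, hAdef⟩ : ∃ A : ℝ, A = 2*ε*γ/r^2 + γ/(3*r) + γ/4 + γ*(1+r) + ν*r^2/(6*ε)
      + α/2 + ν*r^2/(3*ε) + 1 := ⟨_, rfl⟩
  obtain ⟨u, hu'⟩ : ∃ u : ℝ, u = ε⁻¹ := ⟨_, rfl⟩
  obtain ⟨v, hv'⟩ : ∃ v : ℝ, v = r⁻¹ := ⟨_, rfl⟩
  have hu0 : 0 < u := by rw [hu']; positivity
  have hv0 : 0 < v := by rw [hv']; positivity
  have hεu : ε * u = 1 := by rw [hu']; field_simp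
  have hrv : r * v = 1 := by rw [hv']; field_simp
  have hAu : A = 2*ε*γ*v^2 + γ*v/3 + γ/4 + γ*(1+r) + ν*r^2*u/6 + α/2 + ν*r^2*u/3 + 1 := by
    rw [hAdef, hu', hv']; ring
  have hA0 : 0 < A := by rw [hAu]; positivity
  -- derivative of Phi is nonpositive on (0,∞)
  have hΦd : ∀ t : ℝ, HasDerivAt (CI.Phi w ν α δ r ε γ A) (CI.DPhi w ν α δ r ε γ A t) t :=
    fun t => CI.hasDerivAt_Phi hsmooth t
  have hderiv_le : ∀ t ∈ interior (Set.Ici (0:ℝ)), deriv (CI.Phi w ν α δ r ε γ A) t ≤ 0 := by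
    intro t ht
    rw [interior_Ici] at ht
    rw [(hΦd t).deriv]
    refine CI.DPhi_nonpos hsmooth hν hα hδ hr0 hε hA1a hγ0 hγ hAdef t ?_ ?_ ?_ ?_
    · intro x hx
      have h := hpde t ht x hx
      rw [CI.dt1_eq hsmooth, CI.dxx_eq hsmooth] at h
      exact h
    · have h := hrobin t ht
      rw [CI.dx_eq hsmooth] at h
      exact h
    · exact CI.GT_at0 hsmooth t ht hbc0
    · exact hbc0 t ht.le
  have hanti : AntitoneOn (CI.Phi w ν α δ r ε γ A) (Set.Ici 0) :=
    antitoneOn_of_deriv_nonpos (convex_Ici 0)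
      (fun t _ => (hΦd t).continuousAt.continuousWithinAt)
      (fun t ht => (hΦd t).differentiableAt.differentiableWithinAt)
      hderiv_le
  obtain ⟨B, hB⟩ : ∃ B : ℝ, B = A * CI.qN w 0 + CI.V w ν α δ r ε 0 := ⟨_, rfl⟩
  have hΦ0 : CI.Phi w ν α δ r ε γ A 0 = B := by
    unfold CI.Phi
    rw [hB]
    norm_num
  have hΦle : ∀ t ≥ (0:ℝ), CI.Phi w ν α δ r ε γ A t ≤ B := by
    intro t ht
    rw [← hΦ0]
    exact hanti Set.self_mem_Ici ht ht
  -- lower bound on the energy functional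
  have hVu : ∀ t : ℝ, CI.V w ν α δ r ε t = ν/2*CI.qP w t - α/2*CI.qN w t + δ/4*CI.qQ w t
      + ν*u/2*(w t 1)^2 + ν*r*u*(CI.qX w t * w t 1) := by
    intro t; unfold CI.V; rw [hu']; ring
  have hlow : ∀ t : ℝ, ν/2*CI.qP w t + δ/4*CI.qQ w t + ν*u/4*(w t 1)^2 + CI.qN w t
      ≤ A*CI.qN w t + CI.V w ν α δ r ε t := by
    intro t
    exact CI.core_lower ν α δ r ε γ A u v (CI.qN w t) (CI.qP w t) (CI.qQ w t) (CI.qX w t)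
      (w t 1) (CI.V w ν α δ r ε t)
      hν hα hδ hr0 hε hu0 hv0 hεu hrv hγ0 hAu (hVu t) (CI.sqX_le hsmooth t)
      (CI.qN_nonneg t) (CI.qP_nonneg t) (CI.qQ_nonneg t)
  have hEnonneg : ∀ t : ℝ, 0 ≤ A*CI.qN w t + CI.V w ν α δ r ε t := by
    intro t
    have h1 : 0 ≤ ν/2*CI.qP w t := mul_nonneg (by positivity) (CI.qP_nonneg t)
    have h2 : 0 ≤ δ/4*CI.qQ w t := mul_nonneg (by positivity) (CI.qQ_nonneg t)
    have h3 : 0 ≤ ν*u/4*(w t 1)^2 := mul_nonneg (by positivity) (sq_nonneg _)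
    linarith [hlow t, CI.qN_nonneg (w := w) t]
  have hB0 : 0 ≤ B := by rw [hB]; exact hEnonneg 0
  -- convert statement quantities
  have hL2P : ∀ t : ℝ, L2sq (dx w t) = CI.qP w t := by
    intro t
    exact intervalIntegral.integral_congr fun x _ => by rw [CI.dx_eq hsmooth]
  have hL4Q : ∀ t : ℝ, L4q (w t) = CI.qQ w t := fun t => rfl
  have hL2T : ∀ s : ℝ, L2sq (dt1 w s) = CI.qT w s := by
    intro s
    exact intervalIntegral.integral_congr fun x _ => by rw [CI.dt1_eq hsmooth]
  have hIeq : ∀ t : ℝ, (∫ s in (0:ℝ)..t, Real.exp (2*γ*s) * L2sq (dt1 w s))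
      = ∫ s in (0:ℝ)..t, Real.exp (2*γ*s) * CI.qT w s := by
    intro t
    exact intervalIntegral.integral_congr fun s _ => by rw [hL2T s]
  have hH : HkSq 1 (w 0) = CI.qN w 0 + CI.qP w 0 := by
    unfold HkSq
    rw [Finset.sum_range_succ, Finset.sum_range_one]
    have h1 : (∫ x in (0:ℝ)..1, (iteratedDeriv 0 (w 0) x)^2) = CI.qN w 0 :=
      intervalIntegral.integral_congr fun x _ => by rw [iteratedDeriv_zero]
    have h2 : (∫ x in (0:ℝ)..1, (iteratedDeriv 1 (w 0) x)^2) = CI.qP w 0 :=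
      intervalIntegral.integral_congr fun x _ => by
        rw [iteratedDeriv_one, (CI.hwx hsmooth 0 x).deriv]
    rw [h1, h2]
  -- main decay bound
  have hmain : ∀ t ≥ (0:ℝ),
      ν * L2sq (dx w t) + (ν/(2*ε)) * (w t 1)^2 + (δ/2) * L4q (w t)
        + (Real.exp (-2*γ*t) / 3) * (∫ s in (0:ℝ)..t, Real.exp (2*γ*s) * L2sq (dt1 w s))
      ≤ 3*B*Real.exp (-2*γ*t) := by
    intro t ht
    have hP := hΦle t ht
    have hphit : CI.Phi w ν α δ r ε γ A t
        = Real.exp (2*γ*t) * (A * CI.qN w t + CI.V w ν α δ r ε t)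
          + 1/2 * ∫ s in (0:ℝ)..t, Real.exp (2*γ*s) * CI.qT w s := rfl
    rw [hphit] at hP
    have hInn : 0 ≤ ∫ s in (0:ℝ)..t, Real.exp (2*γ*s) * CI.qT w s :=
      intervalIntegral.integral_nonneg ht
        (fun s _ => mul_nonneg (Real.exp_nonneg _) (CI.qT_nonneg s))
    have hexpnn := Real.exp_nonneg (-2*γ*t)
    have hee : Real.exp (-2*γ*t) * Real.exp (2*γ*t) = 1 := by
      rw [← Real.exp_add, show -2*γ*t + 2*γ*t = 0 by ring, Real.exp_zero]
    -- c1 : the integral term is bounded by 2B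
    have hc1 : (∫ s in (0:ℝ)..t, Real.exp (2*γ*s) * CI.qT w s) ≤ 2*B := by
      have h0 : 0 ≤ Real.exp (2*γ*t) * (A * CI.qN w t + CI.V w ν α δ r ε t) :=
        mul_nonneg (Real.exp_nonneg _) (hEnonneg t)
      linarith
    -- c2 : exponential decay of the energy
    have hc2 : A * CI.qN w t + CI.V w ν α δ r ε t ≤ B * Real.exp (-2*γ*t) := by
      have hY : Real.exp (2*γ*t) * (A * CI.qN w t + CI.V w ν α δ r ε t) ≤ B := by
        linarith
      calc A * CI.qN w t + CI.V w ν α δ r ε t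
          = Real.exp (-2*γ*t)
            * (Real.exp (2*γ*t) * (A * CI.qN w t + CI.V w ν α δ r ε t)) := by
            rw [← mul_assoc, hee, one_mul]
        _ ≤ Real.exp (-2*γ*t) * B := mul_le_mul_of_nonneg_left hY hexpnn
        _ = B * Real.exp (-2*γ*t) := by ring
    -- energy part
    have hbrb : (ν/(2*ε))*(w t 1)^2 = ν*u/2*(w t 1)^2 := by rw [hu']; ring
    have hen : ν * CI.qP w t + (ν/(2*ε)) * (w t 1)^2 + (δ/2) * CI.qQ w t
        ≤ 2*(A*CI.qN w t + CI.V w ν α δ r ε t) := by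
      linarith [hlow t, hbrb, CI.qN_nonneg (w := w) t]
    -- integral part
    have hint : (Real.exp (-2*γ*t) / 3)
        * (∫ s in (0:ℝ)..t, Real.exp (2*γ*s) * CI.qT w s)
        ≤ (Real.exp (-2*γ*t) / 3) * (2*B) :=
      mul_le_mul_of_nonneg_left hc1 (by positivity)
    rw [hL2P t, hL4Q t, hIeq t]
    have hBexp : 0 ≤ B * Real.exp (-2*γ*t) := mul_nonneg hB0 hexpnn
    nlinarith [hen, hc2, hint, hBexp]
  -- choose the constant
  obtain ⟨H, hHdef⟩ : ∃ H : ℝ, H = CI.qN w 0 + CI.qP w 0 := ⟨_, rfl⟩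
  have hHnn : 0 ≤ H := by
    rw [hHdef]
    linarith [CI.qN_nonneg (w := w) 0, CI.qP_nonneg (w := w) 0]
  refine ⟨if H = 0 then 1 else (3*B+1)/H, ?_, ?_⟩
  · by_cases h : H = 0
    · simp [h]
    · have hHpos : 0 < H := lt_of_le_of_ne hHnn (Ne.symm h)
      rw [if_neg h]
      positivity
  · intro t ht
    rw [hH, ← hHdef]
    by_cases h : H = 0
    · -- zero initial data
      have hN0 : CI.qN w 0 = 0 := by
        have := CI.qN_nonneg (w := w) 0
        have := CI.qP_nonneg (w := w) 0
        rw [hHdef] at h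
        linarith
      have hzero : ∀ x ∈ Set.Icc (0:ℝ) 1, w 0 x = 0 :=
        zero_on_Icc_of_integral_sq_zero (CI.cw hsmooth 0) hN0
      have hP0 : CI.qP w 0 = 0 := by
        have := CI.qN_nonneg (w := w) 0
        have := CI.qP_nonneg (w := w) 0
        rw [hHdef] at h
        linarith
      have hw01 : w 0 1 = 0 := hzero 1 (by norm_num)
      have hQ0 : CI.qQ w 0 = 0 := by
        unfold CI.qQ
        rw [show (∫ x in (0:ℝ)..1, (w 0 x)^4) = ∫ x in (0:ℝ)..1, (0:ℝ) from
          intervalIntegral.integral_congr fun x hx => by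
            rw [hzero x (by rwa [Set.uIcc_of_le (zero_le_one (α := ℝ))] at hx)]; norm_num]
        simp
      have hBzero : B = 0 := by
        rw [hB, hVu 0, hN0, hP0, hQ0, hw01]
        ring
      have := hmain t ht
      rw [hBzero] at this
      rw [if_pos h, h]
      simpa using this
    · have hHpos : 0 < H := lt_of_le_of_ne hHnn (Ne.symm h)
      rw [if_neg h]
      have heq : (3*B+1)/H * Real.exp (-2*γ*t) * H = (3*B+1) * Real.exp (-2*γ*t) := by
        field_simp
      rw [heq]
      have := hmain t ht
      nlinarith [Real.exp_nonneg (-2*γ*t), this]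
end

section
/- There exists a constant C > 0 (depending on ν, α, δ, r, γ, ε but not on t) such that for all t ≥ 0: ‖y^ε_t(t)‖² + 2ν e^{−2γt} ∫₀ᵗ e^{2γs} ‖y^ε_{xt}(s)‖² ds + 6δ e^{−2γt} ∫₀ᵗ e^{2γs} ‖y^ε_t(s) y^ε(s)‖² ds + (ν/ε) e^{−2γt} ∫₀ᵗ e^{2γs} (y^ε_t(s,1))² ds ≤ C e^{−2γt} ( ‖y₀‖₂² + ‖y₀‖₁⁴ ). -/
open MeasureTheory intervalIntegral Real

section EnergyHelpers

open MeasureTheory intervalIntegral Real Set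

/-- directional partial derivative -/
noncomputable def pd (g : ℝ × ℝ → ℝ) (v : ℝ × ℝ) : ℝ × ℝ → ℝ := fun p => fderiv ℝ g p v

lemma pd_contDiff {g : ℝ × ℝ → ℝ} (hg : ContDiff ℝ (⊤ : ℕ∞) g) (v : ℝ × ℝ) :
    ContDiff ℝ (⊤ : ℕ∞) (pd g v) :=
  (hg.fderiv_right (by simp)).clm_apply contDiff_const

lemma hasDerivAt_slice_t {g : ℝ × ℝ → ℝ} (hg : ContDiff ℝ (⊤ : ℕ∞) g) (t x : ℝ) :
    HasDerivAt (fun s => g (s, x)) (pd g (1, 0) (t, x)) t := by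
  have h1 : HasDerivAt (fun s : ℝ => (s, x)) ((1:ℝ), (0:ℝ)) t :=
    (hasDerivAt_id t).prodMk (hasDerivAt_const t x)
  exact (hg.differentiable (by simp) (t, x)).hasFDerivAt.comp_hasDerivAt t h1

lemma hasDerivAt_slice_x {g : ℝ × ℝ → ℝ} (hg : ContDiff ℝ (⊤ : ℕ∞) g) (t x : ℝ) :
    HasDerivAt (fun y => g (t, y)) (pd g (0, 1) (t, x)) x := by
  have h1 : HasDerivAt (fun y : ℝ => (t, y)) ((0:ℝ), (1:ℝ)) x :=
    (hasDerivAt_const x t).prodMk (hasDerivAt_id x)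
  exact (hg.differentiable (by simp) (t, x)).hasFDerivAt.comp_hasDerivAt x h1

lemma pd_comm {g : ℝ × ℝ → ℝ} (hg : ContDiff ℝ (⊤ : ℕ∞) g) (u v : ℝ × ℝ) (p : ℝ × ℝ) :
    pd (pd g v) u p = pd (pd g u) v p := by
  have hd : ∀ y, HasFDerivAt g (fderiv ℝ g y) y :=
    fun y => (hg.differentiable (by simp) y).hasFDerivAt
  have h2 : HasFDerivAt (fderiv ℝ g) (fderiv ℝ (fderiv ℝ g) p) p :=
    ((hg.fderiv_right (m := (⊤ : ℕ∞)) (by simp)).differentiable (by simp) p).hasFDerivAt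
  have key : ∀ z : ℝ × ℝ, ∀ u : ℝ × ℝ,
      pd (pd g z) u p = fderiv ℝ (fderiv ℝ g) p u z := by
    intro z u
    have h3 : HasFDerivAt (fun q => (fderiv ℝ g q) z)
        ((fderiv ℝ g p).comp (0 : (ℝ × ℝ) →L[ℝ] (ℝ × ℝ))
          + (fderiv ℝ (fderiv ℝ g) p).flip z) p :=
      h2.clm_apply (hasFDerivAt_const z p)
    have h4 := h3.fderiv
    show (fderiv ℝ (fun q => (fderiv ℝ g q) z) p) u = ((fderiv ℝ (fderiv ℝ g) p) u) z
    rw [h4]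
    simp
  rw [key v u, key u v, second_derivative_symmetric hd h2 u v]

lemma hasDerivAt_paramInt {g : ℝ × ℝ → ℝ} (hg : ContDiff ℝ (⊤ : ℕ∞) g) (t : ℝ) :
    HasDerivAt (fun s => ∫ x in (0:ℝ)..1, g (s, x))
      (∫ x in (0:ℝ)..1, pd g (1, 0) (t, x)) t := by
  have hc : Continuous g := hg.continuous
  have hcp : Continuous (pd g (1, 0)) := (pd_contDiff hg _).continuous
  obtain ⟨M, hM⟩ := ((isCompact_closedBall t 1).prod
    (isCompact_Icc (a := (0:ℝ)) (b := 1))).exists_bound_of_continuousOn hcp.continuousOn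
  refine (intervalIntegral.hasDerivAt_integral_of_dominated_loc_of_deriv_le
    (F := fun s x => g (s, x)) (F' := fun s x => pd g (1, 0) (s, x))
    (bound := fun _ => M) (s := Metric.ball t 1) (Metric.ball_mem_nhds t one_pos) ?_ ?_ ?_ ?_ ?_ ?_).2
  · exact Filter.Eventually.of_forall fun s =>
      (hc.comp (Continuous.prodMk_right s)).aestronglyMeasurable
  · exact (hc.comp (Continuous.prodMk_right t)).intervalIntegrable 0 1
  · exact (hcp.comp (Continuous.prodMk_right t)).aestronglyMeasurable
  · refine Filter.Eventually.of_forall fun x hx s hs => hM (s, x) ?_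
    refine ⟨Metric.ball_subset_closedBall hs, ?_⟩
    have : x ∈ Set.Ioc (0:ℝ) 1 := by
      simpa [Set.uIoc_of_le (by norm_num : (0:ℝ) ≤ 1)] using hx
    exact ⟨this.1.le, this.2⟩
  · exact intervalIntegrable_const
  · exact Filter.Eventually.of_forall fun x _ s _ => hasDerivAt_slice_t hg s x

lemma hasDerivAt_paramInt' {g : ℝ × ℝ → ℝ} (hg : ContDiff ℝ (⊤ : ℕ∞) g) (t : ℝ) {d : ℝ → ℝ}
    (hd : ∀ x, HasDerivAt (fun s => g (s, x)) (d x) t) :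
    HasDerivAt (fun s => ∫ x in (0:ℝ)..1, g (s, x)) (∫ x in (0:ℝ)..1, d x) t := by
  have h := hasDerivAt_paramInt hg t
  have : (∫ x in (0:ℝ)..1, pd g (1, 0) (t, x)) = ∫ x in (0:ℝ)..1, d x :=
    intervalIntegral.integral_congr fun x _ =>
      ((hd x).unique (hasDerivAt_slice_t hg t x)).symm
  rwa [this] at h

/-- (∫₀¹ x v)² ≤ (1/3) ∫₀¹ v² for continuous v -/
lemma cs_xv {v : ℝ → ℝ} (hv : Continuous v) :
    (∫ x in (0:ℝ)..1, x * v x)^2 ≤ (1/3) * ∫ x in (0:ℝ)..1, (v x)^2 := by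
  set I := ∫ x in (0:ℝ)..1, x * v x with hI
  have h0 : (0:ℝ) ≤ ∫ x in (0:ℝ)..1, (v x - 3 * I * x)^2 :=
    intervalIntegral.integral_nonneg (by norm_num) (fun x _ => sq_nonneg _)
  have hexp : ∀ x : ℝ, (v x - 3 * I * x)^2
      = (v x)^2 - (6*I) * (x * v x) + (9*I^2) * x^2 := by intro x; ring
  have hint1 : IntervalIntegrable (fun x => (v x)^2) volume 0 1 :=
    (hv.pow 2).intervalIntegrable 0 1
  have hint2 : IntervalIntegrable (fun x => (6*I) * (x * v x)) volume 0 1 :=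
    (continuous_const.mul (continuous_id.mul hv)).intervalIntegrable 0 1
  have hint3 : IntervalIntegrable (fun x => (9*I^2) * x^2) volume 0 1 :=
    (continuous_const.mul (continuous_pow 2)).intervalIntegrable 0 1
  rw [intervalIntegral.integral_congr (g := fun x => (v x)^2 - (6*I) * (x * v x) + (9*I^2) * x^2)
    (fun x _ => hexp x)] at h0
  rw [intervalIntegral.integral_add (hint1.sub hint2) hint3,
      intervalIntegral.integral_sub hint1 hint2,
      intervalIntegral.integral_const_mul, intervalIntegral.integral_const_mul] at h0
  have hx2 : ∫ x in (0:ℝ)..1, x^2 = 1/3 := by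
    rw [integral_pow]; norm_num
  rw [hx2, ← hI] at h0
  nlinarith [h0]

/-- Cauchy-Schwarz: (∫₀ˣ u)² ≤ x ∫₀ˣ u², for 0 ≤ x, u continuous -/
lemma cs_basic {u : ℝ → ℝ} (hu : Continuous u) {x : ℝ} (hx : 0 ≤ x) :
    (∫ y in (0:ℝ)..x, u y)^2 ≤ x * ∫ y in (0:ℝ)..x, (u y)^2 := by
  rcases eq_or_lt_of_le hx with h | h
  · simp [← h]
  set J := ∫ y in (0:ℝ)..x, u y with hJ
  set c := J / x with hc
  have h0 : (0:ℝ) ≤ ∫ y in (0:ℝ)..x, (u y - c)^2 :=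
    intervalIntegral.integral_nonneg hx (fun y _ => sq_nonneg _)
  have hint1 : IntervalIntegrable (fun y => (u y)^2) volume 0 x :=
    (hu.pow 2).intervalIntegrable 0 x
  have hint2 : IntervalIntegrable (fun y => (2*c) * u y) volume 0 x :=
    (continuous_const.mul hu).intervalIntegrable 0 x
  rw [intervalIntegral.integral_congr (g := fun y => (u y)^2 - (2*c) * u y + c^2)
    (fun y _ => by ring)] at h0
  rw [intervalIntegral.integral_add (hint1.sub hint2) (intervalIntegrable_const),
      intervalIntegral.integral_sub hint1 hint2,
      intervalIntegral.integral_const_mul, intervalIntegral.integral_const] at h0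
  simp only [← hJ, smul_eq_mul, sub_zero] at h0
  have e1 : 2 * c * J = 2 * (J^2 / x) := by rw [hc]; ring
  have e2 : x * c^2 = J^2 / x := by rw [hc]; field_simp
  have h3 : J^2 / x ≤ ∫ y in (0:ℝ)..x, (u y)^2 := by linarith
  rw [div_le_iff₀ h] at h3
  linarith [h3, mul_comm x (∫ y in (0:ℝ)..x, (u y)^2)]

/-- Poincaré: v(0)=0, v' continuous derivative ⇒ ∫₀¹ v² ≤ ½ ∫₀¹ v'² -/
lemma poincare {v v' : ℝ → ℝ} (hd : ∀ y, HasDerivAt v (v' y) y)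
    (hc : Continuous v') (h0 : v 0 = 0) :
    ∫ x in (0:ℝ)..1, (v x)^2 ≤ (1/2) * ∫ x in (0:ℝ)..1, (v' x)^2 := by
  set M := ∫ x in (0:ℝ)..1, (v' x)^2 with hM
  have hptw : ∀ x ∈ Set.Icc (0:ℝ) 1, (v x)^2 ≤ x * M := by
    intro x hx
    have hftc : ∫ y in (0:ℝ)..x, v' y = v x - v 0 :=
      intervalIntegral.integral_eq_sub_of_hasDerivAt (fun y _ => hd y)
        (hc.intervalIntegrable 0 x)
    have h1 : (v x)^2 ≤ x * ∫ y in (0:ℝ)..x, (v' y)^2 := by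
      have := cs_basic hc hx.1
      rwa [hftc, h0, sub_zero] at this
    refine h1.trans (mul_le_mul_of_nonneg_left ?_ hx.1)
    exact intervalIntegral.integral_mono_interval le_rfl hx.1 hx.2
      (Filter.Eventually.of_forall fun y => sq_nonneg _)
      ((hc.pow 2).intervalIntegrable 0 1)
  calc ∫ x in (0:ℝ)..1, (v x)^2 ≤ ∫ x in (0:ℝ)..1, x * M := by
        apply intervalIntegral.integral_mono_on (by norm_num)
        · exact ((continuous_iff_continuousAt.2
            fun y => (hd y).continuousAt).pow 2).intervalIntegrable 0 1
        · exact (continuous_id.mul continuous_const).intervalIntegrable 0 1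
        · exact hptw
    _ = (1/2) * M := by
        rw [intervalIntegral.integral_mul_const, integral_id]
        norm_num

/-- continuous, ∫₀¹ v² = 0 ⇒ v = 0 on (0,1) -/
lemma zero_of_integral_sq_zero {v : ℝ → ℝ} (hv : Continuous v)
    (h : ∫ x in (0:ℝ)..1, (v x)^2 = 0) : ∀ x ∈ Set.Ioo (0:ℝ) 1, v x = 0 := by
  intro x0 hx0
  by_contra hne
  have hInt : IntegrableOn (fun x => (v x)^2) (Set.Ioc 0 1) volume :=
    (hv.pow 2).integrableOn_Ioc
  rw [intervalIntegral.integral_of_le (by norm_num : (0:ℝ) ≤ 1)] at h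
  have hae : (fun x => (v x)^2) =ᵐ[volume.restrict (Set.Ioc (0:ℝ) 1)] 0 :=
    (MeasureTheory.integral_eq_zero_iff_of_nonneg
      (fun x => sq_nonneg (v x)) hInt).mp h
  have hae2 : ∀ᵐ x ∂(volume : Measure ℝ), x ∈ Set.Ioc (0:ℝ) 1 → (v x)^2 = 0 :=
    (ae_restrict_iff' measurableSet_Ioc).mp hae
  set U : Set ℝ := {x | v x ≠ 0} ∩ Set.Ioo 0 1 with hU
  have hUopen : IsOpen U := (isOpen_compl_singleton.preimage hv).inter isOpen_Ioo
  have hsub : U ⊆ {x | ¬(x ∈ Set.Ioc (0:ℝ) 1 → (v x)^2 = 0)} := by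
    rintro y ⟨hy1, hy2⟩
    intro hcon
    exact hy1 (pow_eq_zero_iff (n := 2) (by norm_num) |>.mp
      (hcon ⟨hy2.1, hy2.2.le⟩))
  have hzero : volume U = 0 := measure_mono_null hsub (ae_iff.mp hae2)
  have hpos : 0 < volume U := hUopen.measure_pos volume ⟨x0, hne, hx0⟩
  exact hpos.ne' hzero

/-- a.e. x in uIoc 0 1 is in Ioo 0 1 -/
lemma ae_mem_Ioo : ∀ᵐ x ∂(volume : Measure ℝ),
    x ∈ Set.uIoc (0:ℝ) 1 → x ∈ Set.Ioo (0:ℝ) 1 := by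
  have h1 : ∀ᵐ x ∂(volume : Measure ℝ), x ≠ 1 := by
    rw [ae_iff]
    have : {x : ℝ | ¬x ≠ 1} = {1} := by ext x; simp
    rw [this]
    exact Real.volume_singleton
  filter_upwards [h1] with x hx hxI
  rw [Set.uIoc_of_le (by norm_num : (0:ℝ) ≤ 1)] at hxI
  exact ⟨hxI.1, lt_of_le_of_ne hxI.2 hx⟩

end EnergyHelpers

section ident
variable {w : ℝ → ℝ → ℝ} (hw : ContDiff ℝ (⊤ : ℕ∞) (Function.uncurry w))
include hw

lemma dt1_eq (t x : ℝ) : dt1 w t x = pd (Function.uncurry w) (1,0) (t,x) :=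
  (hasDerivAt_slice_t hw t x).deriv

lemma dx_eq (t x : ℝ) : dx w t x = pd (Function.uncurry w) (0,1) (t,x) :=
  (hasDerivAt_slice_x hw t x).deriv

lemma dt1_fun_eq (t : ℝ) : dt1 w t = fun x => pd (Function.uncurry w) (1,0) (t,x) :=
  funext fun x => dt1_eq hw t x

lemma dxt_eq (t x : ℝ) : dxt w t x = pd (pd (Function.uncurry w) (1,0)) (0,1) (t,x) := by
  rw [dxt, dt1_fun_eq hw]
  exact (hasDerivAt_slice_x (pd_contDiff hw (1,0)) t x).deriv

lemma dx_fun_eq (t : ℝ) : deriv (w t) = fun x => pd (Function.uncurry w) (0,1) (t,x) :=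
  funext fun x => dx_eq hw t x

lemma dxx_eq (t x : ℝ) : dxx w t x = pd (pd (Function.uncurry w) (0,1)) (0,1) (t,x) := by
  rw [dxx, show (2:ℕ) = 1 + 1 from rfl, iteratedDeriv_succ, iteratedDeriv_one, dx_fun_eq hw]
  exact (hasDerivAt_slice_x (pd_contDiff hw (0,1)) t x).deriv

end ident
section EnergyCore

open MeasureTheory intervalIntegral Real Set

/-- `f(t) = ‖w_t(t)‖²` -/
noncomputable def fE (W : ℝ × ℝ → ℝ) : ℝ → ℝ :=
  fun t => ∫ x in (0:ℝ)..1, (pd W (1,0) (t,x))^2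
/-- `D(t) = f'(t)` -/
noncomputable def DE (W : ℝ × ℝ → ℝ) : ℝ → ℝ :=
  fun t => ∫ x in (0:ℝ)..1, 2 * pd W (1,0) (t,x) * pd (pd W (1,0)) (1,0) (t,x)
/-- `‖w_xt(t)‖²` -/
noncomputable def A1E (W : ℝ × ℝ → ℝ) : ℝ → ℝ :=
  fun t => ∫ x in (0:ℝ)..1, (pd (pd W (1,0)) (0,1) (t,x))^2
/-- `‖w_t(t) w(t)‖²` -/
noncomputable def QE (W : ℝ × ℝ → ℝ) : ℝ → ℝ :=
  fun t => ∫ x in (0:ℝ)..1, (pd W (1,0) (t,x))^2 * (W (t,x))^2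
/-- the grouped dissipation term -/
noncomputable def GE (ν δ ε : ℝ) (W : ℝ × ℝ → ℝ) : ℝ → ℝ :=
  fun t => 2*ν*A1E W t + 6*δ*QE W t + (ν/ε)*(pd W (1,0) (t,1))^2

section Core
variable {W : ℝ × ℝ → ℝ} (sW : ContDiff ℝ (⊤ : ℕ∞) W)
include sW

lemma contWt : Continuous (pd W (1,0)) := (pd_contDiff sW _).continuous
lemma contWtx : Continuous (pd (pd W (1,0)) (0,1)) :=
  (pd_contDiff (pd_contDiff sW _) _).continuous

lemma fE_hasDeriv (t : ℝ) : HasDerivAt (fE W) (DE W t) t := by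
  refine hasDerivAt_paramInt' ((pd_contDiff sW (1,0)).pow 2) t (fun x => ?_)
  have h := (hasDerivAt_slice_t (pd_contDiff sW (1,0)) t x).pow 2
  exact h.congr_deriv (by simp)

lemma swap3 (p : ℝ × ℝ) :
    pd (pd (pd W (0,1)) (0,1)) (1,0) p = pd (pd (pd W (1,0)) (0,1)) (0,1) p := by
  have h1 : pd (pd W (0,1)) (1,0) = pd (pd W (1,0)) (0,1) :=
    funext (pd_comm sW (1,0) (0,1))
  calc pd (pd (pd W (0,1)) (0,1)) (1,0) p
      = pd (pd (pd W (0,1)) (1,0)) (0,1) p :=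
        pd_comm (pd_contDiff sW (0,1)) (1,0) (0,1) p
    _ = pd (pd (pd W (1,0)) (0,1)) (0,1) p := by rw [h1]

/-- t-derivative of the PDE -/
lemma Wtt_eq {ν α δ : ℝ}
    (hpde' : ∀ t > (0:ℝ), ∀ x ∈ Set.Ioo (0:ℝ) 1,
      pd W (1,0) (t,x) = ν * pd (pd W (0,1)) (0,1) (t,x) + α * W (t,x) - δ * (W (t,x))^3)
    {t x : ℝ} (ht : 0 < t) (hx : x ∈ Set.Ioo (0:ℝ) 1) :
    pd (pd W (1,0)) (1,0) (t,x)
      = ν * pd (pd (pd W (1,0)) (0,1)) (0,1) (t,x)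
        + α * pd W (1,0) (t,x) - 3 * δ * (W (t,x))^2 * pd W (1,0) (t,x) := by
  have heq : (fun s => pd W (1,0) (s,x))
      =ᶠ[nhds t] (fun s => ν * pd (pd W (0,1)) (0,1) (s,x) + α * W (s,x) - δ * (W (s,x))^3) := by
    filter_upwards [isOpen_Ioi.mem_nhds ht] with s hs
    exact hpde' s hs x hx
  have hL : HasDerivAt (fun s => pd W (1,0) (s,x)) (pd (pd W (1,0)) (1,0) (t,x)) t :=
    hasDerivAt_slice_t (pd_contDiff sW (1,0)) t x
  have hL' : HasDerivAt
      (fun s => ν * pd (pd W (0,1)) (0,1) (s,x) + α * W (s,x) - δ * (W (s,x))^3)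
      (pd (pd W (1,0)) (1,0) (t,x)) t := by
    rwa [Filter.EventuallyEq.hasDerivAt_iff heq] at hL
  have hR : HasDerivAt
      (fun s => ν * pd (pd W (0,1)) (0,1) (s,x) + α * W (s,x) - δ * (W (s,x))^3)
      (ν * pd (pd (pd W (0,1)) (0,1)) (1,0) (t,x) + α * pd W (1,0) (t,x)
        - δ * (3 * (W (t,x))^2 * pd W (1,0) (t,x))) t := by
    have h1 := (hasDerivAt_slice_t (pd_contDiff (pd_contDiff sW (0,1)) (0,1)) t x).const_mul ν
    have h2 := (hasDerivAt_slice_t sW t x).const_mul α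
    have h3' := (hasDerivAt_slice_t sW t x).pow 3
    have h3 := h3'.const_mul δ
    have := (h1.add h2).sub h3
    exact this.congr_deriv (by norm_num)
  have := hL'.unique hR
  rw [this, swap3 sW]
  ring

/-- integration by parts -/
lemma ibp (t : ℝ) :
    ∫ x in (0:ℝ)..1, pd (pd (pd W (1,0)) (0,1)) (0,1) (t,x) * pd W (1,0) (t,x)
      = pd (pd W (1,0)) (0,1) (t,1) * pd W (1,0) (t,1)
        - pd (pd W (1,0)) (0,1) (t,0) * pd W (1,0) (t,0)
        - ∫ x in (0:ℝ)..1, (pd (pd W (1,0)) (0,1) (t,x))^2 := by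
  have hu : ∀ x ∈ Set.uIcc (0:ℝ) 1, HasDerivAt (fun y => pd (pd W (1,0)) (0,1) (t,y))
      (pd (pd (pd W (1,0)) (0,1)) (0,1) (t,x)) x :=
    fun x _ => hasDerivAt_slice_x (pd_contDiff (pd_contDiff sW (1,0)) (0,1)) t x
  have hv : ∀ x ∈ Set.uIcc (0:ℝ) 1, HasDerivAt (fun y => pd W (1,0) (t,y))
      (pd (pd W (1,0)) (0,1) (t,x)) x :=
    fun x _ => hasDerivAt_slice_x (pd_contDiff sW (1,0)) t x
  have hcu' : Continuous (fun x => pd (pd (pd W (1,0)) (0,1)) (0,1) (t,x)) :=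
    (pd_contDiff (pd_contDiff (pd_contDiff sW (1,0)) (0,1)) (0,1)).continuous.comp
      (Continuous.prodMk_right t)
  have hcu : Continuous (fun x => pd (pd W (1,0)) (0,1) (t,x)) :=
    (contWtx sW).comp (Continuous.prodMk_right t)
  have hcv : Continuous (fun x => pd W (1,0) (t,x)) :=
    (contWt sW).comp (Continuous.prodMk_right t)
  have key := intervalIntegral.integral_deriv_mul_eq_sub hu hv
    (hcu'.intervalIntegrable 0 1) (hcu.intervalIntegrable 0 1)
  have hsplit : (∫ x in (0:ℝ)..1,
        (pd (pd (pd W (1,0)) (0,1)) (0,1) (t,x) * pd W (1,0) (t,x)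
          + pd (pd W (1,0)) (0,1) (t,x) * pd (pd W (1,0)) (0,1) (t,x)))
      = (∫ x in (0:ℝ)..1, pd (pd (pd W (1,0)) (0,1)) (0,1) (t,x) * pd W (1,0) (t,x))
        + ∫ x in (0:ℝ)..1, (pd (pd W (1,0)) (0,1) (t,x))^2 := by
    rw [← intervalIntegral.integral_add ((hcu'.fun_mul hcv).intervalIntegrable 0 1)
      ((hcu.fun_pow 2).intervalIntegrable 0 1)]
    exact intervalIntegral.integral_congr fun x _ => by ring
  rw [hsplit] at key
  linarith [key]

end Core
end EnergyCore

section EnergyCore2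

open MeasureTheory intervalIntegral Real Set

variable {W : ℝ × ℝ → ℝ} (sW : ContDiff ℝ (⊤ : ℕ∞) W)
include sW

lemma Wt0 (hbc0' : ∀ t ≥ (0:ℝ), W (t,0) = 0) {t : ℝ} (ht : 0 < t) :
    pd W (1,0) (t,0) = 0 := by
  have heq : (fun s => W (s,0)) =ᶠ[nhds t] (fun _ => (0:ℝ)) := by
    filter_upwards [isOpen_Ioi.mem_nhds ht] with s hs
    exact hbc0' s hs.le
  have h := hasDerivAt_slice_t sW t 0
  have h3 : HasDerivAt (fun s => W (s,0)) 0 t :=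
    (Filter.EventuallyEq.hasDerivAt_iff heq).mpr (hasDerivAt_const t (0:ℝ))
  exact h.unique h3

lemma robin_t {ε r : ℝ}
    (hrobin' : ∀ t > (0:ℝ), ε * pd W (0,1) (t,1) + W (t,1)
      = -r * ∫ x in (0:ℝ)..1, x * W (t,x))
    {t : ℝ} (ht : 0 < t) :
    ε * pd (pd W (1,0)) (0,1) (t,1) + pd W (1,0) (t,1)
      = -r * ∫ x in (0:ℝ)..1, x * pd W (1,0) (t,x) := by
  have hφ : HasDerivAt (fun s => ε * pd W (0,1) (s,1) + W (s,1))
      (ε * pd (pd W (0,1)) (1,0) (t,1) + pd W (1,0) (t,1)) t :=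
    ((hasDerivAt_slice_t (pd_contDiff sW (0,1)) t 1).const_mul ε).add
      (hasDerivAt_slice_t sW t 1)
  have hinner : HasDerivAt (fun s => ∫ x in (0:ℝ)..1, x * W (s,x))
      (∫ x in (0:ℝ)..1, x * pd W (1,0) (t,x)) t :=
    hasDerivAt_paramInt' (g := fun p => p.2 * W p) (contDiff_snd.mul sW) t
      (fun x => (hasDerivAt_slice_t sW t x).const_mul x)
  have hψ : HasDerivAt (fun s => -r * ∫ x in (0:ℝ)..1, x * W (s,x))
      (-r * ∫ x in (0:ℝ)..1, x * pd W (1,0) (t,x)) t := hinner.const_mul (-r)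
  have heq : (fun s => ε * pd W (0,1) (s,1) + W (s,1))
      =ᶠ[nhds t] (fun s => -r * ∫ x in (0:ℝ)..1, x * W (s,x)) := by
    filter_upwards [isOpen_Ioi.mem_nhds ht] with s hs
    exact hrobin' s hs
  have hφ' : HasDerivAt (fun s => -r * ∫ x in (0:ℝ)..1, x * W (s,x))
      (ε * pd (pd W (0,1)) (1,0) (t,1) + pd W (1,0) (t,1)) t :=
    (Filter.EventuallyEq.hasDerivAt_iff heq).mp hφ
  have := hφ'.unique hψ
  rwa [pd_comm sW (1,0) (0,1)] at this

lemma DE_eq {ν α δ : ℝ}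
    (hpde' : ∀ t > (0:ℝ), ∀ x ∈ Set.Ioo (0:ℝ) 1,
      pd W (1,0) (t,x) = ν * pd (pd W (0,1)) (0,1) (t,x) + α * W (t,x) - δ * (W (t,x))^3)
    (hbc0' : ∀ t ≥ (0:ℝ), W (t,0) = 0)
    {t : ℝ} (ht : 0 < t) :
    DE W t = 2*ν*(pd (pd W (1,0)) (0,1) (t,1) * pd W (1,0) (t,1))
      - 2*ν*A1E W t + 2*α*fE W t - 6*δ*QE W t := by
  have hc3 : Continuous (fun x => pd (pd (pd W (1,0)) (0,1)) (0,1) (t,x)) :=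
    (pd_contDiff (pd_contDiff (pd_contDiff sW (1,0)) (0,1)) (0,1)).continuous.comp
      (Continuous.prodMk_right t)
  have hcWt : Continuous (fun x => pd W (1,0) (t,x)) :=
    (pd_contDiff sW (1,0)).continuous.comp (Continuous.prodMk_right t)
  have hcW : Continuous (fun x => W (t,x)) := sW.continuous.comp (Continuous.prodMk_right t)
  have hcongr : DE W t = ∫ x in (0:ℝ)..1,
      (2*ν*(pd (pd (pd W (1,0)) (0,1)) (0,1) (t,x) * pd W (1,0) (t,x))
        + (2*α*(pd W (1,0) (t,x))^2 - 6*δ*((pd W (1,0) (t,x))^2 * (W (t,x))^2))) := by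
    apply intervalIntegral.integral_congr_ae
    filter_upwards [ae_mem_Ioo] with x hx hxI
    rw [Wtt_eq sW hpde' ht (hx hxI)]
    ring
  rw [hcongr, intervalIntegral.integral_add
      ((continuous_const.fun_mul (hc3.fun_mul hcWt)).intervalIntegrable 0 1)
      (((continuous_const.fun_mul (hcWt.fun_pow 2)).fun_sub
        (continuous_const.fun_mul ((hcWt.fun_pow 2).fun_mul (hcW.fun_pow 2)))).intervalIntegrable 0 1),
    intervalIntegral.integral_sub
      ((continuous_const.fun_mul (hcWt.fun_pow 2)).intervalIntegrable 0 1)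
      ((continuous_const.fun_mul ((hcWt.fun_pow 2).fun_mul (hcW.fun_pow 2))).intervalIntegrable 0 1),
    intervalIntegral.integral_const_mul, intervalIntegral.integral_const_mul,
    intervalIntegral.integral_const_mul, ibp sW t, Wt0 sW hbc0' ht]
  show 2*ν*(_ - _*0 - _) + (2*α*fE W t - 6*δ*QE W t) = _
  unfold A1E
  ring

lemma DE_le_decay {ν α δ r ε : ℝ} (hν : 0 < ν) (hδ : 0 < δ) (hε : 0 < ε)
    (hpde' : ∀ t > (0:ℝ), ∀ x ∈ Set.Ioo (0:ℝ) 1,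
      pd W (1,0) (t,x) = ν * pd (pd W (0,1)) (0,1) (t,x) + α * W (t,x) - δ * (W (t,x))^3)
    (hbc0' : ∀ t ≥ (0:ℝ), W (t,0) = 0)
    (hrobin' : ∀ t > (0:ℝ), ε * pd W (0,1) (t,1) + W (t,1)
      = -r * ∫ x in (0:ℝ)..1, x * W (t,x))
    {t : ℝ} (ht : 0 < t) :
    DE W t ≤ -(4*ν - 2*α - ν*r^2/(6*ε)) * fE W t := by
  have hcWt : Continuous (fun x => pd W (1,0) (t,x)) :=
    (pd_contDiff sW (1,0)).continuous.comp (Continuous.prodMk_right t)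
  have hrob : ε * pd (pd W (1,0)) (0,1) (t,1) + pd W (1,0) (t,1)
      = -r * ∫ x in (0:ℝ)..1, x * pd W (1,0) (t,x) := robin_t sW hrobin' ht
  have hDE := DE_eq sW hpde' hbc0' ht
  have hI2 : (∫ x in (0:ℝ)..1, x * pd W (1,0) (t,x))^2 ≤ (1/3) * fE W t := cs_xv hcWt
  have hP : fE W t ≤ (1/2) * A1E W t :=
    poincare (fun y => hasDerivAt_slice_x (pd_contDiff sW (1,0)) t y)
      ((pd_contDiff (pd_contDiff sW (1,0)) (0,1)).continuous.comp (Continuous.prodMk_right t))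
      (Wt0 sW hbc0' ht)
  have hQ0 : 0 ≤ QE W t := intervalIntegral.integral_nonneg (by norm_num)
    (fun x _ => mul_nonneg (sq_nonneg _) (sq_nonneg _))
  set a := pd W (1,0) (t,1) with ha
  set b := pd (pd W (1,0)) (0,1) (t,1) with hb
  set I := ∫ x in (0:ℝ)..1, x * pd W (1,0) (t,x) with hI
  set f := fE W t with hf
  set A1 := A1E W t with hA1
  set Q := QE W t with hQ
  have key : ε * DE W t ≤ ε * (-(4*ν - 2*α - ν*r^2/(6*ε)) * f) := by
    have hεμ : ε * (-(4*ν - 2*α - ν*r^2/(6*ε)) * f) = -(4*ν*ε - 2*α*ε - ν*r^2/6) * f := by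
      field_simp
    rw [hεμ, hDE]
    have hεb : ε * b = -a - r * I := by linarith
    have hA : 0 ≤ ν*r^2*((1/3)*f - I^2) :=
      mul_nonneg (mul_nonneg hν.le (sq_nonneg r)) (by linarith)
    have hB : 0 ≤ ν*ε*(A1 - 2*f) :=
      mul_nonneg (mul_nonneg hν.le hε.le) (by linarith)
    have hC : 0 ≤ δ*ε*Q := mul_nonneg (mul_nonneg hδ.le hε.le) hQ0
    have hD : 0 ≤ 2*ν*(a + r*I/2)^2 := by positivity
    have hbb : ε * (2*ν*(b*a)) = 2*ν*((-a - r*I)*a) := by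
      calc ε * (2*ν*(b*a)) = 2*ν*((ε*b)*a) := by ring
        _ = 2*ν*((-a-r*I)*a) := by rw [hεb]
    nlinarith [hA, hB, hC, hD, hbb]
  exact le_of_mul_le_mul_left key hε

lemma DE_GE_le {ν α δ r γ ε : ℝ} (hν : 0 < ν) (hδ : 0 < δ) (hε : 0 < ε)
    (hpde' : ∀ t > (0:ℝ), ∀ x ∈ Set.Ioo (0:ℝ) 1,
      pd W (1,0) (t,x) = ν * pd (pd W (0,1)) (0,1) (t,x) + α * W (t,x) - δ * (W (t,x))^3)
    (hbc0' : ∀ t ≥ (0:ℝ), W (t,0) = 0)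
    (hrobin' : ∀ t > (0:ℝ), ε * pd W (0,1) (t,1) + W (t,1)
      = -r * ∫ x in (0:ℝ)..1, x * W (t,x))
    {t : ℝ} (ht : 0 < t) :
    DE W t + GE ν δ ε W t + 2*γ*fE W t ≤ (ν*r^2/(3*ε) + 2*α + 2*γ) * fE W t := by
  have hcWt : Continuous (fun x => pd W (1,0) (t,x)) :=
    (pd_contDiff sW (1,0)).continuous.comp (Continuous.prodMk_right t)
  have hrob : ε * pd (pd W (1,0)) (0,1) (t,1) + pd W (1,0) (t,1)
      = -r * ∫ x in (0:ℝ)..1, x * pd W (1,0) (t,x) := robin_t sW hrobin' ht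
  have hDE := DE_eq sW hpde' hbc0' ht
  have hI2 : (∫ x in (0:ℝ)..1, x * pd W (1,0) (t,x))^2 ≤ (1/3) * fE W t := cs_xv hcWt
  unfold GE
  set a := pd W (1,0) (t,1) with ha
  set b := pd (pd W (1,0)) (0,1) (t,1) with hb
  set I := ∫ x in (0:ℝ)..1, x * pd W (1,0) (t,x) with hI
  set f := fE W t with hf
  set A1 := A1E W t with hA1
  set Q := QE W t with hQ
  have key : ε * (DE W t + (2*ν*A1 + 6*δ*Q + (ν/ε)*a^2) + 2*γ*f)
      ≤ ε * ((ν*r^2/(3*ε) + 2*α + 2*γ) * f) := by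
    have hκ : ε * ((ν*r^2/(3*ε) + 2*α + 2*γ) * f)
        = (ν*r^2/3 + 2*α*ε + 2*γ*ε) * f := by
      field_simp
    rw [hκ, hDE]
    have hεa : ε * ((ν/ε)*a^2) = ν*a^2 := by field_simp
    have hεb : ε * b = -a - r * I := by linarith
    have hA : 0 ≤ ν*r^2*((1/3)*f - I^2) :=
      mul_nonneg (mul_nonneg hν.le (sq_nonneg r)) (by linarith)
    have hD : 0 ≤ ν*(a + r*I)^2 := by positivity
    have hbb : ε * (2*ν*(b*a)) = 2*ν*((-a - r*I)*a) := by
      calc ε * (2*ν*(b*a)) = 2*ν*((ε*b)*a) := by ring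
        _ = 2*ν*((-a-r*I)*a) := by rw [hεb]
    nlinarith [hA, hD, hbb, hεa]
  exact le_of_mul_le_mul_left key hε

end EnergyCore2

section EnergyCore3

open MeasureTheory intervalIntegral Real Set

variable {W : ℝ × ℝ → ℝ} (sW : ContDiff ℝ (⊤ : ℕ∞) W)
include sW

lemma fE_cont : Continuous (fE W) :=
  continuous_iff_continuousAt.2 fun t => (fE_hasDeriv sW t).continuousAt

lemma A1E_cont : Continuous (A1E W) := by
  refine continuous_iff_continuousAt.2 fun t => HasDerivAt.continuousAt
    (f' := ∫ x in (0:ℝ)..1, pd (fun p => (pd (pd W (1,0)) (0,1) p)^2) (1,0) (t,x)) ?_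
  exact hasDerivAt_paramInt ((pd_contDiff (pd_contDiff sW (1,0)) (0,1)).pow 2) t

lemma QE_cont : Continuous (QE W) := by
  refine continuous_iff_continuousAt.2 fun t => HasDerivAt.continuousAt
    (f' := ∫ x in (0:ℝ)..1, pd (fun p => (pd W (1,0) p)^2 * (W p)^2) (1,0) (t,x)) ?_
  exact hasDerivAt_paramInt (((pd_contDiff sW (1,0)).pow 2).mul (sW.pow 2)) t

lemma GE_cont (ν δ ε : ℝ) : Continuous (GE ν δ ε W) := by
  unfold GE
  have haE : Continuous (fun t : ℝ => (pd W (1,0) (t,1))^2) :=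
    ((pd_contDiff sW (1,0)).continuous.comp (continuous_id.prodMk continuous_const)).pow 2
  exact ((continuous_const.mul (A1E_cont sW)).add
    (continuous_const.mul (QE_cont sW))).add (continuous_const.mul haE)

lemma fE_nonneg (t : ℝ) : 0 ≤ fE W t :=
  intervalIntegral.integral_nonneg (by norm_num) (fun x _ => sq_nonneg _)

lemma decay {ν α δ r ε : ℝ} (hν : 0 < ν) (hδ : 0 < δ) (hε : 0 < ε)
    (hpde' : ∀ t > (0:ℝ), ∀ x ∈ Set.Ioo (0:ℝ) 1,
      pd W (1,0) (t,x) = ν * pd (pd W (0,1)) (0,1) (t,x) + α * W (t,x) - δ * (W (t,x))^3)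
    (hbc0' : ∀ t ≥ (0:ℝ), W (t,0) = 0)
    (hrobin' : ∀ t > (0:ℝ), ε * pd W (0,1) (t,1) + W (t,1)
      = -r * ∫ x in (0:ℝ)..1, x * W (t,x)) :
    ∀ t ≥ (0:ℝ), fE W t ≤ fE W 0 * Real.exp (-(4*ν - 2*α - ν*r^2/(6*ε)) * t) := by
  set μ := 4*ν - 2*α - ν*r^2/(6*ε) with hμ
  set h : ℝ → ℝ := fun t => Real.exp (μ*t) * fE W t with hh
  have hder : ∀ t, HasDerivAt h
      (Real.exp (μ*t) * (μ*1) * fE W t + Real.exp (μ*t) * DE W t) t := by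
    intro t
    exact (((hasDerivAt_id t).const_mul μ).exp).mul (fE_hasDeriv sW t)
  have hanti : AntitoneOn h (Set.Ici (0:ℝ)) := by
    apply antitoneOn_of_deriv_nonpos (convex_Ici 0)
    · exact ((Real.continuous_exp.comp (continuous_const.mul continuous_id)).mul
        (fE_cont sW)).continuousOn
    · exact fun t _ => (hder t).differentiableAt.differentiableWithinAt
    · intro t ht
      rw [interior_Ici] at ht
      rw [(hder t).deriv]
      have hDle := DE_le_decay sW hν hδ hε hpde' hbc0' hrobin' ht
      rw [← hμ] at hDle
      have he : (0:ℝ) ≤ Real.exp (μ*t) := (Real.exp_pos _).le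
      have h2 := mul_le_mul_of_nonneg_left hDle he
      calc Real.exp (μ*t) * (μ*1) * fE W t + Real.exp (μ*t) * DE W t
          ≤ Real.exp (μ*t) * (μ*1) * fE W t + Real.exp (μ*t) * (-μ * fE W t) :=
            add_le_add_right h2 _
        _ = 0 := by ring
  intro t ht
  have h1 : h t ≤ h 0 := hanti (Set.self_mem_Ici) ht ht
  have h0 : h 0 = fE W 0 := by simp [hh]
  rw [h0] at h1
  calc fE W t = (Real.exp (μ*t) * fE W t) * Real.exp (-(μ*t)) := by
        rw [mul_comm (Real.exp (μ*t)), mul_assoc, ← Real.exp_add]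
        simp
    _ ≤ fE W 0 * Real.exp (-(μ*t)) :=
        mul_le_mul_of_nonneg_right h1 (Real.exp_pos _).le
    _ = fE W 0 * Real.exp (-μ*t) := by rw [neg_mul]

lemma exp_int_bound {c : ℝ} (hc : 0 < c) {t : ℝ} (ht : 0 ≤ t) :
    ∫ s in (0:ℝ)..t, Real.exp (-(c*s)) ≤ 1/c := by
  have hd : ∀ s ∈ Set.uIcc (0:ℝ) t,
      HasDerivAt (fun s => -Real.exp (-(c*s))/c) (Real.exp (-(c*s))) s := by
    intro s _
    have h1 : HasDerivAt (fun s : ℝ => -(c*s)) (-c) s := by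
      simpa using ((hasDerivAt_id s).const_mul c).fun_neg
    have h2 := (h1.exp).neg.div_const c
    exact h2.congr_deriv (by field_simp)
  have hint : ∫ s in (0:ℝ)..t, Real.exp (-(c*s))
      = (-Real.exp (-(c*t))/c) - (-Real.exp (-(c*0))/c) :=
    intervalIntegral.integral_eq_sub_of_hasDerivAt hd
      ((Real.continuous_exp.comp (continuous_const.mul continuous_id).neg).intervalIntegrable 0 t)
  rw [hint]
  have : (0:ℝ) < Real.exp (-(c*t)) := Real.exp_pos _
  have h0 : Real.exp (-(c*0)) = 1 := by norm_num
  rw [h0]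
  have h3 : 0 ≤ Real.exp (-(c*t))/c := by positivity
  have h4 : -Real.exp (-(c*t))/c = -(Real.exp (-(c*t))/c) := by ring
  rw [h4]
  have h5 : (-1:ℝ)/c = -(1/c) := by ring
  rw [h5]
  linarith

end EnergyCore3

section EnergyCore4

open MeasureTheory intervalIntegral Real Set

variable {W : ℝ × ℝ → ℝ} (sW : ContDiff ℝ (⊤ : ℕ∞) W)
include sW

lemma main_bound {ν α δ r γ ε : ℝ} (hν : 0 < ν) (hα : 0 < α) (hδ : 0 < δ)
    (hr0 : 0 < r) (hε : 0 < ε)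
    (hpde' : ∀ t > (0:ℝ), ∀ x ∈ Set.Ioo (0:ℝ) 1,
      pd W (1,0) (t,x) = ν * pd (pd W (0,1)) (0,1) (t,x) + α * W (t,x) - δ * (W (t,x))^3)
    (hbc0' : ∀ t ≥ (0:ℝ), W (t,0) = 0)
    (hrobin' : ∀ t > (0:ℝ), ε * pd W (0,1) (t,1) + W (t,1)
      = -r * ∫ x in (0:ℝ)..1, x * W (t,x))
    (hγ0 : 0 < γ) (hγ : γ ≤ 2*ν - 2*ν*r^2/(3*ε) - α) :
    ∀ t ≥ (0:ℝ), Real.exp (2*γ*t) * fE W t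
        + (∫ s in (0:ℝ)..t, Real.exp (2*γ*s) * GE ν δ ε W s)
      ≤ (1 + (ν*r^2/(3*ε) + 2*α + 2*γ)/((4*ν - 2*α - ν*r^2/(6*ε)) - 2*γ)) * fE W 0 := by
  set μ := 4*ν - 2*α - ν*r^2/(6*ε) with hμdef
  set κ := ν*r^2/(3*ε) + 2*α + 2*γ with hκdef
  have hr2 : 0 < r^2 := pow_pos hr0 2
  have h6ε : (0:ℝ) < 6*ε := by linarith
  -- 2γ < μ
  have hμγ : 2*γ < μ := by
    have e1 : μ * (6*ε) = 24*ν*ε - 12*α*ε - ν*r^2 := by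
      rw [hμdef]; field_simp; ring
    have e2 : (2*ν - 2*ν*r^2/(3*ε) - α) * (12*ε) = 24*ν*ε - 8*ν*r^2 - 12*α*ε := by
      field_simp; ring
    have e3 : γ * (12*ε) ≤ 24*ν*ε - 8*ν*r^2 - 12*α*ε := by
      rw [← e2]; exact mul_le_mul_of_nonneg_right hγ (by linarith)
    have e4 : 2*γ*(6*ε) < μ*(6*ε) := by
      rw [e1]
      have : 0 < 7*(ν*r^2) := by positivity
      nlinarith [e3]
    exact lt_of_mul_lt_mul_right e4 h6ε.le
  have hκ0 : (0:ℝ) < κ := by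
    have h1 : 0 ≤ ν*r^2/(3*ε) := div_nonneg (by positivity) (by linarith)
    rw [hκdef]; linarith
  have hcμγ : 0 < μ - 2*γ := by linarith
  clear_value μ κ
  -- continuity
  have cGEe : Continuous (fun s => Real.exp (2*γ*s) * GE ν δ ε W s) :=
    (Real.continuous_exp.comp (continuous_const.mul continuous_id)).mul (GE_cont sW ν δ ε)
  have cfe : Continuous (fun s => Real.exp (2*γ*s) * fE W s) :=
    (Real.continuous_exp.comp (continuous_const.mul continuous_id)).mul (fE_cont sW)
  set Φ : ℝ → ℝ := fun t => Real.exp (2*γ*t) * fE W t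
      + (∫ s in (0:ℝ)..t, Real.exp (2*γ*s) * GE ν δ ε W s)
      - κ * ∫ s in (0:ℝ)..t, Real.exp (2*γ*s) * fE W s with hΦdef
  have hΦder : ∀ t, HasDerivAt Φ
      (Real.exp (2*γ*t)*(2*γ*1)*fE W t + Real.exp (2*γ*t)*DE W t
        + Real.exp (2*γ*t) * GE ν δ ε W t - κ*(Real.exp (2*γ*t)*fE W t)) t := by
    intro t
    exact ((((hasDerivAt_id t).const_mul (2*γ)).exp.mul (fE_hasDeriv sW t)).add
      ((cGEe.integral_hasStrictDerivAt 0 t).hasDerivAt)).sub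
      (((cfe.integral_hasStrictDerivAt 0 t).hasDerivAt).const_mul κ)
  have hanti : AntitoneOn Φ (Set.Ici (0:ℝ)) := by
    apply antitoneOn_of_deriv_nonpos (convex_Ici 0)
    · exact (continuous_iff_continuousAt.2 fun t => (hΦder t).continuousAt).continuousOn
    · exact fun t _ => (hΦder t).differentiableAt.differentiableWithinAt
    · intro t ht
      rw [interior_Ici] at ht
      rw [(hΦder t).deriv]
      have hkey := DE_GE_le sW hν hδ hε hpde' hbc0' hrobin' (γ := γ) ht
      rw [← hκdef] at hkey
      have he : (0:ℝ) ≤ Real.exp (2*γ*t) := (Real.exp_pos _).le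
      have h2 : Real.exp (2*γ*t) * (DE W t + GE ν δ ε W t + 2*γ*fE W t)
          ≤ Real.exp (2*γ*t) * (κ * fE W t) := mul_le_mul_of_nonneg_left hkey he
      nlinarith [h2]
  intro t ht
  have hΦ0 : Φ 0 = fE W 0 := by
    rw [hΦdef]
    simp
  have h1 : Φ t ≤ fE W 0 := by
    rw [← hΦ0]
    exact hanti Set.self_mem_Ici ht ht
  -- bound the κ-integral
  have hdec := decay sW hν hδ hε hpde' hbc0' hrobin'
  have hIf : (∫ s in (0:ℝ)..t, Real.exp (2*γ*s) * fE W s)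
      ≤ fE W 0 * (1/(μ - 2*γ)) := by
    have hmono : (∫ s in (0:ℝ)..t, Real.exp (2*γ*s) * fE W s)
        ≤ ∫ s in (0:ℝ)..t, fE W 0 * Real.exp (-((μ - 2*γ)*s)) := by
      apply intervalIntegral.integral_mono_on ht (cfe.intervalIntegrable 0 t)
        ((continuous_const.mul (Real.continuous_exp.comp
          (continuous_const.mul continuous_id).neg)).intervalIntegrable 0 t)
      intro s hs
      have hds := hdec s hs.1
      rw [← hμdef] at hds
      have he : (0:ℝ) ≤ Real.exp (2*γ*s) := (Real.exp_pos _).le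
      calc Real.exp (2*γ*s) * fE W s ≤ Real.exp (2*γ*s) * (fE W 0 * Real.exp (-μ*s)) :=
            mul_le_mul_of_nonneg_left hds he
        _ = fE W 0 * Real.exp (-((μ - 2*γ)*s)) := by
            rw [mul_comm (Real.exp (2*γ*s)), mul_assoc, ← Real.exp_add]
            ring_nf
    refine hmono.trans ?_
    rw [intervalIntegral.integral_const_mul]
    exact mul_le_mul_of_nonneg_left (exp_int_bound sW hcμγ ht) (fE_nonneg sW 0)
  have h2 : κ * (∫ s in (0:ℝ)..t, Real.exp (2*γ*s) * fE W s)
      ≤ κ * (fE W 0 * (1/(μ - 2*γ))) := mul_le_mul_of_nonneg_left hIf hκ0.le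
  have hfin : Real.exp (2*γ*t) * fE W t
      + (∫ s in (0:ℝ)..t, Real.exp (2*γ*s) * GE ν δ ε W s)
      ≤ fE W 0 + κ * (fE W 0 * (1/(μ - 2*γ))) := by
    have := h1
    simp only [hΦdef] at this
    linarith
  refine hfin.trans (le_of_eq ?_)
  field_simp
end EnergyCore4

section EnergyCore5

open MeasureTheory intervalIntegral Real Set

lemma C1_pos {ν α r γ ε : ℝ} (hν : 0 < ν) (hα : 0 < α) (hr0 : 0 < r) (hε : 0 < ε)
    (hγ0 : 0 < γ) (hγ : γ ≤ 2*ν - 2*ν*r^2/(3*ε) - α) :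
    0 < 1 + (ν*r^2/(3*ε) + 2*α + 2*γ)/((4*ν - 2*α - ν*r^2/(6*ε)) - 2*γ) := by
  have hr2 : 0 < r^2 := pow_pos hr0 2
  have h6ε : (0:ℝ) < 6*ε := by linarith
  have hμγ : 2*γ < 4*ν - 2*α - ν*r^2/(6*ε) := by
    have e1 : (4*ν - 2*α - ν*r^2/(6*ε)) * (6*ε) = 24*ν*ε - 12*α*ε - ν*r^2 := by
      field_simp; ring
    have e2 : (2*ν - 2*ν*r^2/(3*ε) - α) * (12*ε) = 24*ν*ε - 8*ν*r^2 - 12*α*ε := by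
      field_simp; ring
    have e3 : γ * (12*ε) ≤ 24*ν*ε - 8*ν*r^2 - 12*α*ε := by
      rw [← e2]; exact mul_le_mul_of_nonneg_right hγ (by linarith)
    have e4 : 2*γ*(6*ε) < (4*ν - 2*α - ν*r^2/(6*ε))*(6*ε) := by
      rw [e1]
      have : 0 < 7*(ν*r^2) := by positivity
      nlinarith [e3]
    exact lt_of_mul_lt_mul_right e4 h6ε.le
  have hκ0 : (0:ℝ) < ν*r^2/(3*ε) + 2*α + 2*γ := by
    have h1 : 0 ≤ ν*r^2/(3*ε) := div_nonneg (by positivity) (by linarith)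
    linarith
  have : 0 < (ν*r^2/(3*ε) + 2*α + 2*γ)/((4*ν - 2*α - ν*r^2/(6*ε)) - 2*γ) :=
    div_pos hκ0 (by linarith)
  linarith

variable {W : ℝ × ℝ → ℝ} (sW : ContDiff ℝ (⊤ : ℕ∞) W)
include sW

lemma fE_zero_initial {ν α δ : ℝ}
    (hpde' : ∀ t > (0:ℝ), ∀ x ∈ Set.Ioo (0:ℝ) 1,
      pd W (1,0) (t,x) = ν * pd (pd W (0,1)) (0,1) (t,x) + α * W (t,x) - δ * (W (t,x))^3)
    (hW0 : ∀ x ∈ Set.Ioo (0:ℝ) 1, W (0,x) = 0)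
    (hWxx0 : ∀ x ∈ Set.Ioo (0:ℝ) 1, pd (pd W (0,1)) (0,1) (0,x) = 0) :
    fE W 0 = 0 := by
  have hpt : ∀ x ∈ Set.Ioo (0:ℝ) 1, pd W (1,0) (0,x) = 0 := by
    intro x hx
    have cF1 : Continuous (fun s => pd W (1,0) (s,x)) :=
      (pd_contDiff sW (1,0)).continuous.comp (continuous_id.prodMk continuous_const)
    have cF2 : Continuous (fun s =>
        ν * pd (pd W (0,1)) (0,1) (s,x) + α * W (s,x) - δ * (W (s,x))^3) := by
      have c1 : Continuous (fun s => pd (pd W (0,1)) (0,1) (s,x)) :=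
        (pd_contDiff (pd_contDiff sW (0,1)) (0,1)).continuous.comp
          (continuous_id.prodMk continuous_const)
      have c2 : Continuous (fun s => W (s,x)) :=
        sW.continuous.comp (continuous_id.prodMk continuous_const)
      exact ((continuous_const.mul c1).add (continuous_const.mul c2)).sub
        (continuous_const.mul (c2.pow 3))
    have t1 : Filter.Tendsto (fun s => pd W (1,0) (s,x)) (nhdsWithin 0 (Set.Ioi 0))
        (nhds (pd W (1,0) (0,x))) := (cF1.tendsto 0).mono_left nhdsWithin_le_nhds
    have t2 : Filter.Tendsto (fun s =>
        ν * pd (pd W (0,1)) (0,1) (s,x) + α * W (s,x) - δ * (W (s,x))^3)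
        (nhdsWithin 0 (Set.Ioi 0))
        (nhds (ν * pd (pd W (0,1)) (0,1) (0,x) + α * W (0,x) - δ * (W (0,x))^3)) :=
      (cF2.tendsto 0).mono_left nhdsWithin_le_nhds
    have heq : (fun s => pd W (1,0) (s,x)) =ᶠ[nhdsWithin 0 (Set.Ioi 0)]
        (fun s => ν * pd (pd W (0,1)) (0,1) (s,x) + α * W (s,x) - δ * (W (s,x))^3) :=
      Filter.eventually_of_mem self_mem_nhdsWithin (fun s hs => hpde' s hs x hx)
    have t1' : Filter.Tendsto (fun s => pd W (1,0) (s,x)) (nhdsWithin 0 (Set.Ioi 0))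
        (nhds (ν * pd (pd W (0,1)) (0,1) (0,x) + α * W (0,x) - δ * (W (0,x))^3)) :=
      t2.congr' heq.symm
    have := tendsto_nhds_unique t1 t1'
    rw [this, hW0 x hx, hWxx0 x hx]
    ring
  unfold fE
  have : (∫ x in (0:ℝ)..1, (pd W (1,0) (0,x))^2) = ∫ x in (0:ℝ)..1, (0:ℝ) := by
    apply intervalIntegral.integral_congr_ae
    filter_upwards [ae_mem_Ioo] with x hx hxI
    rw [hpt x (hx hxI)]
    norm_num
  rw [this]
  simp

end EnergyCore5

theorem penalized_wt_stabilization
    (ν α δ r γ ε : ℝ) (w : ℝ → ℝ → ℝ)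
    (hν : 0 < ν) (hα : 0 < α) (hδ : 0 < δ) (hr0 : 0 < r) (hε : 0 < ε)
    -- smooth classical solution (C^∞ up to the boundary)
    (hsmooth : ContDiff ℝ (⊤ : ℕ∞) (Function.uncurry w))
    -- penalized Chafee–Infante equation w_t = ν w_xx + α w − δ w³ on (0,∞) × (0,1)
    (hpde : ∀ t > (0:ℝ), ∀ x ∈ Set.Ioo (0:ℝ) 1,
      dt1 w t x = ν * dxx w t x + α * w t x - δ * (w t x)^3)
    -- boundary conditions: w(t,0) = 0 and Robin condition ε w_x(t,1) + w(t,1) = u^ε(t)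
    (hbc0 : ∀ t ≥ (0:ℝ), w t 0 = 0)
    (hrobin : ∀ t > (0:ℝ), ε * dx w t 1 + w t 1 = -r * xInner (w t))
    -- Assumption (A1)
    (hA1a : r^2 < 3*ε)
    (hA1b : α / ν ≤ 2 * (3*ε - r^2) / (3*ε))
    (hγ0 : 0 < γ) (hγ : γ ≤ 2*ν - 2*ν*r^2/(3*ε) - α) :
    ∃ C > (0:ℝ), ∀ t ≥ (0:ℝ),
      L2sq (dt1 w t)
        + 2 * ν * Real.exp (-2*γ*t) * (∫ s in (0:ℝ)..t, Real.exp (2*γ*s) * L2sq (dxt w s))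
        + 6 * δ * Real.exp (-2*γ*t)
          * (∫ s in (0:ℝ)..t, Real.exp (2*γ*s) * (∫ x in (0:ℝ)..1, (dt1 w s x)^2 * (w s x)^2))
        + (ν/ε) * Real.exp (-2*γ*t) * (∫ s in (0:ℝ)..t, Real.exp (2*γ*s) * (dt1 w s 1)^2)
      ≤ C * Real.exp (-2*γ*t) * (HkSq 2 (w 0) + (HkSq 1 (w 0))^2) := by
  have hpde' : ∀ t > (0:ℝ), ∀ x ∈ Set.Ioo (0:ℝ) 1,
      pd (Function.uncurry w) (1,0) (t,x)
        = ν * pd (pd (Function.uncurry w) (0,1)) (0,1) (t,x)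
          + α * Function.uncurry w (t,x) - δ * (Function.uncurry w (t,x))^3 := by
    intro t ht x hx
    have h := hpde t ht x hx
    rw [dt1_eq hsmooth t x, dxx_eq hsmooth t x] at h
    exact h
  have hbc0' : ∀ t ≥ (0:ℝ), Function.uncurry w (t,0) = 0 := fun t ht => hbc0 t ht
  have hrobin' : ∀ t > (0:ℝ), ε * pd (Function.uncurry w) (0,1) (t,1)
      + Function.uncurry w (t,1) = -r * ∫ x in (0:ℝ)..1, x * Function.uncurry w (t,x) := by
    intro t ht
    have h := hrobin t ht
    rw [dx_eq hsmooth t 1] at h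
    exact h
  have hmain := main_bound hsmooth hν hα hδ hr0 hε hpde' hbc0' hrobin' hγ0 hγ
  have hC1 := C1_pos hν hα hr0 hε hγ0 hγ
  set C₁ := 1 + (ν*r^2/(3*ε) + 2*α + 2*γ)/((4*ν - 2*α - ν*r^2/(6*ε)) - 2*γ) with hC₁def
  set B := HkSq 2 (w 0) + (HkSq 1 (w 0))^2 with hBdef
  have hf_id : ∀ t, L2sq (dt1 w t) = fE (Function.uncurry w) t := by
    intro t; unfold L2sq fE
    exact intervalIntegral.integral_congr fun x _ => by rw [dt1_eq hsmooth]
  have hA1_id : ∀ s, L2sq (dxt w s) = A1E (Function.uncurry w) s := by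
    intro s; unfold L2sq A1E
    exact intervalIntegral.integral_congr fun x _ => by rw [dxt_eq hsmooth]
  have hQ_id : ∀ s, (∫ x in (0:ℝ)..1, (dt1 w s x)^2 * (w s x)^2)
      = QE (Function.uncurry w) s := by
    intro s
    exact intervalIntegral.integral_congr fun x _ => by rw [dt1_eq hsmooth]; rfl
  have ha_id : ∀ s, dt1 w s 1 = pd (Function.uncurry w) (1,0) (s,1) :=
    fun s => dt1_eq hsmooth s 1
  have hsplit : ∀ t, (∫ s in (0:ℝ)..t, Real.exp (2*γ*s) * GE ν δ ε (Function.uncurry w) s)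
      = 2*ν*(∫ s in (0:ℝ)..t, Real.exp (2*γ*s) * A1E (Function.uncurry w) s)
        + 6*δ*(∫ s in (0:ℝ)..t, Real.exp (2*γ*s) * QE (Function.uncurry w) s)
        + (ν/ε)*(∫ s in (0:ℝ)..t,
            Real.exp (2*γ*s) * (pd (Function.uncurry w) (1,0) (s,1))^2) := by
    intro t
    have cE : Continuous (fun s : ℝ => Real.exp (2*γ*s)) :=
      Real.continuous_exp.comp (continuous_const.mul continuous_id)
    have cA := A1E_cont hsmooth
    have cQ := QE_cont hsmooth
    have ca : Continuous (fun s : ℝ => (pd (Function.uncurry w) (1,0) (s,1))^2) :=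
      ((pd_contDiff hsmooth (1,0)).continuous.comp
        (continuous_id.prodMk continuous_const)).pow 2
    rw [← intervalIntegral.integral_const_mul, ← intervalIntegral.integral_const_mul,
        ← intervalIntegral.integral_const_mul,
        ← intervalIntegral.integral_add
          ((continuous_const.fun_mul (cE.fun_mul cA)).intervalIntegrable 0 t)
          ((continuous_const.fun_mul (cE.fun_mul cQ)).intervalIntegrable 0 t),
        ← intervalIntegral.integral_add
          (((continuous_const.fun_mul (cE.fun_mul cA)).fun_add
            (continuous_const.fun_mul (cE.fun_mul cQ))).intervalIntegrable 0 t)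
          ((continuous_const.fun_mul (cE.fun_mul ca)).intervalIntegrable 0 t)]
    refine intervalIntegral.integral_congr fun s _ => ?_
    unfold GE
    ring
  have hfinal : ∀ t ≥ (0:ℝ),
      L2sq (dt1 w t)
        + 2 * ν * Real.exp (-2*γ*t) * (∫ s in (0:ℝ)..t, Real.exp (2*γ*s) * L2sq (dxt w s))
        + 6 * δ * Real.exp (-2*γ*t)
          * (∫ s in (0:ℝ)..t, Real.exp (2*γ*s) * (∫ x in (0:ℝ)..1, (dt1 w s x)^2 * (w s x)^2))
        + (ν/ε) * Real.exp (-2*γ*t) * (∫ s in (0:ℝ)..t, Real.exp (2*γ*s) * (dt1 w s 1)^2)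
      ≤ Real.exp (-2*γ*t) * (C₁ * fE (Function.uncurry w) 0) := by
    intro t ht
    have hm := hmain t ht
    rw [hsplit t] at hm
    rw [hf_id t,
      show (∫ s in (0:ℝ)..t, Real.exp (2*γ*s) * L2sq (dxt w s))
          = ∫ s in (0:ℝ)..t, Real.exp (2*γ*s) * A1E (Function.uncurry w) s from
        intervalIntegral.integral_congr fun s _ => by rw [hA1_id s],
      show (∫ s in (0:ℝ)..t, Real.exp (2*γ*s)
            * (∫ x in (0:ℝ)..1, (dt1 w s x)^2 * (w s x)^2))
          = ∫ s in (0:ℝ)..t, Real.exp (2*γ*s) * QE (Function.uncurry w) s from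
        intervalIntegral.integral_congr fun s _ => by rw [hQ_id s],
      show (∫ s in (0:ℝ)..t, Real.exp (2*γ*s) * (dt1 w s 1)^2)
          = ∫ s in (0:ℝ)..t,
              Real.exp (2*γ*s) * (pd (Function.uncurry w) (1,0) (s,1))^2 from
        intervalIntegral.integral_congr fun s _ => by rw [ha_id s]]
    set X1 := ∫ s in (0:ℝ)..t, Real.exp (2*γ*s) * A1E (Function.uncurry w) s with hX1
    set X2 := ∫ s in (0:ℝ)..t, Real.exp (2*γ*s) * QE (Function.uncurry w) s with hX2
    set X3 := ∫ s in (0:ℝ)..t,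
        Real.exp (2*γ*s) * (pd (Function.uncurry w) (1,0) (s,1))^2 with hX3
    have heid : Real.exp (-2*γ*t) * Real.exp (2*γ*t) = 1 := by
      rw [← Real.exp_add]; norm_num
    have hmul := mul_le_mul_of_nonneg_left hm (Real.exp_pos (-2*γ*t)).le
    have hexpand : Real.exp (-2*γ*t) * (Real.exp (2*γ*t) * fE (Function.uncurry w) t
          + (2*ν*X1 + 6*δ*X2 + (ν/ε)*X3))
        = fE (Function.uncurry w) t + 2*ν*Real.exp (-2*γ*t)*X1
          + 6*δ*Real.exp (-2*γ*t)*X2 + (ν/ε)*Real.exp (-2*γ*t)*X3 := by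
      rw [mul_add, ← mul_assoc, heid, one_mul]
      ring
    nlinarith [hmul, hexpand]
  have hHk2nonneg : 0 ≤ HkSq 2 (w 0) := by
    unfold HkSq
    exact Finset.sum_nonneg fun i _ =>
      intervalIntegral.integral_nonneg (by norm_num) fun x _ => sq_nonneg _
  have hB0 : 0 ≤ B := by
    rw [hBdef]
    have := sq_nonneg (HkSq 1 (w 0))
    linarith
  by_cases hB : B = 0
  · -- zero initial data: everything vanishes
    have hB' : HkSq 2 (w 0) + (HkSq 1 (w 0))^2 = 0 := by rw [← hBdef]; exact hB
    have hS : HkSq 2 (w 0) = 0 := by nlinarith [sq_nonneg (HkSq 1 (w 0)), hHk2nonneg]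
    have hS' : ∑ i ∈ Finset.range 3, (∫ x in (0:ℝ)..1, (iteratedDeriv i (w 0) x)^2) = 0 := hS
    have hzero : ∀ i ∈ Finset.range 3,
        (∫ x in (0:ℝ)..1, (iteratedDeriv i (w 0) x)^2) = 0 :=
      (Finset.sum_eq_zero_iff_of_nonneg (fun i _ =>
        intervalIntegral.integral_nonneg (by norm_num) fun x _ => sq_nonneg _)).mp hS'
    have h0int : ∫ x in (0:ℝ)..1, (w 0 x)^2 = 0 := by
      have := hzero 0 (by norm_num)
      simpa [iteratedDeriv_zero] using this
    have hcw0 : Continuous (w 0) := by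
      have : Continuous (fun x => Function.uncurry w (0, x)) :=
        hsmooth.continuous.comp (Continuous.prodMk_right 0)
      exact this
    have hW0 : ∀ x ∈ Set.Ioo (0:ℝ) 1, Function.uncurry w (0,x) = 0 :=
      fun x hx => zero_of_integral_sq_zero hcw0 h0int x hx
    have h2int : ∫ x in (0:ℝ)..1, (iteratedDeriv 2 (w 0) x)^2 = 0 := hzero 2 (by norm_num)
    have heqf : iteratedDeriv 2 (w 0)
        = fun x => pd (pd (Function.uncurry w) (0,1)) (0,1) (0,x) :=
      funext fun x => dxx_eq hsmooth 0 x
    have hc2 : Continuous (iteratedDeriv 2 (w 0)) := by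
      rw [heqf]
      exact (pd_contDiff (pd_contDiff hsmooth (0,1)) (0,1)).continuous.comp
        (Continuous.prodMk_right 0)
    have hWxx0 : ∀ x ∈ Set.Ioo (0:ℝ) 1,
        pd (pd (Function.uncurry w) (0,1)) (0,1) (0,x) = 0 := by
      intro x hx
      have h := zero_of_integral_sq_zero hc2 h2int x hx
      rw [← dxx_eq hsmooth 0 x]
      exact h
    have hf0 : fE (Function.uncurry w) 0 = 0 :=
      fE_zero_initial hsmooth hpde' hW0 hWxx0
    refine ⟨1, one_pos, fun t ht => ?_⟩
    have h := hfinal t ht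
    rw [hf0, mul_zero, mul_zero] at h
    refine h.trans ?_
    rw [hB]
    simp
  · have hBpos : 0 < B := lt_of_le_of_ne hB0 (Ne.symm hB)
    refine ⟨C₁ * fE (Function.uncurry w) 0 / B + 1, ?_, ?_⟩
    · have h1 : 0 ≤ C₁ * fE (Function.uncurry w) 0 / B :=
        div_nonneg (mul_nonneg hC1.le (fE_nonneg hsmooth 0)) hBpos.le
      linarith
    · intro t ht
      refine (hfinal t ht).trans ?_
      have hCB : (C₁ * fE (Function.uncurry w) 0 / B + 1) * Real.exp (-2*γ*t) * B
          = Real.exp (-2*γ*t) * (C₁ * fE (Function.uncurry w) 0 + B) := by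
        field_simp
      rw [hCB]
      have h2 : C₁ * fE (Function.uncurry w) 0
          ≤ C₁ * fE (Function.uncurry w) 0 + B := by linarith
      exact mul_le_mul_of_nonneg_left h2 (Real.exp_pos _).le
end
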